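/- arXiv:1905.09803 — 10 statements merged into one kernel-verified Lean document; each statement's English description precedes it below -/
import Mathlib

section
/- Let Ω be a set of network parametrizations, R the realization map, and ‖·‖ a norm on realizations. Suppose R is (s,α) inverse stable on Ω, i.e. for all Γ ∈ Ω and g ∈ R(Ω) there exists Φ ∈ Ω with R(Φ) = g and ‖Φ − Γ‖_∞ ≤ s‖g − R(Γ)‖^α. Let L be a loss function on realizations and Γ* ∈ Ω a local minimum of L∘R with radius r > 0 (i.e. L(R(Γ*)) ≤ L(R(Φ)) for all Φ ∈ Ω with ‖Φ − Γ*‖_∞ ≤ r). Then R(Γ*) is a local minimum of L on R(Ω) with radius (r/s)^{1/α}, i.e. L(R(Γ*)) ≤ L(g) for all g ∈ R(Ω) with ‖g − R(Γ*)‖ ≤ (r/s)^{1/α}. -/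
/-- Inverse stability transfers local minima of the parametrized problem
to local minima of the realization-space problem. -/
theorem stmt_0 {P B : Type*} [NormedAddCommGroup P] [NormedAddCommGroup B]
    (R : P → B) (L : B → ℝ) (Ω : Set P) (s α : ℝ) (hs : 0 < s) (hα : 0 < α)
    (hL : ∀ g, 0 ≤ L g)
    (hinv : ∀ Γ ∈ Ω, ∀ g ∈ R '' Ω, ∃ Φ ∈ Ω, R Φ = g ∧ ‖Φ - Γ‖ ≤ s * ‖g - R Γ‖ ^ α)
    (Γs : P) (hΓs : Γs ∈ Ω) (r : ℝ) (hr : 0 < r)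
    (hloc : ∀ Φ ∈ Ω, ‖Φ - Γs‖ ≤ r → L (R Γs) ≤ L (R Φ)) :
    ∀ g ∈ R '' Ω, ‖g - R Γs‖ ≤ (r / s) ^ (1 / α) → L (R Γs) ≤ L g := by
  intro g hg hgle
  obtain ⟨Φ, hΦ, hRΦ, hdist⟩ := hinv Γs hΓs g hg
  have hrs : (0:ℝ) ≤ r / s := le_of_lt (div_pos hr hs)
  have h1 : ‖g - R Γs‖ ^ α ≤ ((r / s) ^ (1 / α)) ^ α :=
    Real.rpow_le_rpow (norm_nonneg _) hgle hα.le
  have h2 : ((r / s) ^ (1 / α)) ^ α = r / s := by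
    rw [← Real.rpow_mul hrs, one_div_mul_cancel hα.ne', Real.rpow_one]
  have h3 : ‖Φ - Γs‖ ≤ r := by
    calc ‖Φ - Γs‖ ≤ s * ‖g - R Γs‖ ^ α := hdist
    _ ≤ s * (r / s) := by
        rw [← h2]; exact mul_le_mul_of_nonneg_left h1 hs.le
    _ = r := by field_simp
  have := hloc Φ hΦ h3
  rwa [hRΦ] at this
end

section
/- Let B be a normed space, S ⊆ B a convex set, L : B → [0,∞) convex and c-Lipschitz on S, and let Ω_N be a set of parametrizations with realizations in S. Assume the approximability condition: sup_{f ∈ S} inf_{Φ ∈ Ω_N} ‖R(Φ) − f‖ < η. Let g* be a local minimum with radius r' ≥ 2η of the problem min_{g ∈ R(Ω_N)} L(g). Then for every g ∈ R(Ω_N) it holds that L(g*) ≤ L(g) + (2c/r')·‖g* − g‖·η. -/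
/-- Quality of local realization minima under approximability (Theorem `thm:opt`). -/
theorem stmt_1 {P B : Type*} [NormedAddCommGroup B] [NormedSpace ℝ B]
    (R : P → B) (Ω : Set P) (S : Set B) (hSconv : Convex ℝ S) (hRS : R '' Ω ⊆ S)
    (L : B → ℝ) (hL : ∀ g, 0 ≤ L g) (c : ℝ) (hLconv : ConvexOn ℝ S L)
    (hLlip : ∀ x ∈ S, ∀ y ∈ S, |L x - L y| ≤ c * ‖x - y‖)
    (η r' : ℝ) (hη : 0 < η) (hr' : 2 * η ≤ r')
    (happrox : ∀ f ∈ S, ∃ Φ ∈ Ω, ‖R Φ - f‖ < η)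
    (gs : B) (hgs : gs ∈ R '' Ω)
    (hloc : ∀ g ∈ R '' Ω, ‖g - gs‖ ≤ r' → L gs ≤ L g) :
    ∀ g ∈ R '' Ω, L gs ≤ L g + (2 * c / r') * ‖gs - g‖ * η := by
  intro g hg
  have hgsS : gs ∈ S := hRS hgs
  have hgS : g ∈ S := hRS hg
  have hr0 : (0:ℝ) < r' := lt_of_lt_of_le (by linarith) hr'
  by_cases hgg : g = gs
  · subst hgg; simp
  have hd : 0 < ‖gs - g‖ := by
    rw [norm_pos_iff, sub_ne_zero]; exact fun h => hgg h.symm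
  have hc : 0 ≤ c := by
    have h1 := hLlip gs hgsS g hgS
    nlinarith [abs_nonneg (L gs - L g)]
  by_cases hcase : ‖g - gs‖ ≤ r'
  · have h1 := hloc g hg hcase
    have h2 : 0 ≤ (2 * c / r') * ‖gs - g‖ * η := by positivity
    linarith
  push_neg at hcase
  set d := ‖gs - g‖ with hdd
  have hd' : ‖g - gs‖ = d := by rw [hdd, norm_sub_rev]
  rw [hd'] at hcase
  set lam := (r' - η) / d with hlam
  have hlam0 : 0 < lam := div_pos (by linarith) hd
  have hlam1 : lam < 1 := by
    rw [hlam, div_lt_one hd]; linarith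
  set h : B := (1 - lam) • gs + lam • g with hh
  have hhS : h ∈ S := hSconv hgsS hgS (by linarith) hlam0.le (by ring)
  obtain ⟨Φ, hΦ, hΦh⟩ := happrox h hhS
  have hRΦS : R Φ ∈ S := hRS ⟨Φ, hΦ, rfl⟩
  have hhgs : ‖h - gs‖ = lam * d := by
    have heq : h - gs = lam • (g - gs) := by rw [hh]; module
    rw [heq, norm_smul, Real.norm_eq_abs, abs_of_pos hlam0, hd']
  have hclose : ‖R Φ - gs‖ ≤ r' := by
    have htri : ‖R Φ - gs‖ ≤ ‖R Φ - h‖ + ‖h - gs‖ := norm_sub_le_norm_sub_add_norm_sub _ _ _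
    have hld : lam * d = r' - η := by rw [hlam]; field_simp
    rw [hhgs, hld] at htri
    linarith [hΦh.le]
  have h1 : L gs ≤ L (R Φ) := hloc _ ⟨Φ, hΦ, rfl⟩ hclose
  have h2 : L (R Φ) ≤ L h + c * η := by
    have hlip := hLlip (R Φ) hRΦS h hhS
    have habs : L (R Φ) - L h ≤ c * ‖R Φ - h‖ := le_of_abs_le hlip
    nlinarith [mul_le_mul_of_nonneg_left hΦh.le hc]
  have h3 : L h ≤ (1 - lam) * L gs + lam * L g :=
    hLconv.2 hgsS hgS (by linarith) hlam0.le (by ring)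
  have key : lam * (L gs - L g) ≤ c * η := by nlinarith
  have key2 : (r' - η) * (L gs - L g) ≤ c * η * d := by
    have hdl : d * lam = r' - η := by rw [hlam]; field_simp
    calc (r' - η) * (L gs - L g) = d * (lam * (L gs - L g)) := by rw [← hdl]; ring
      _ ≤ d * (c * η) := mul_le_mul_of_nonneg_left key hd.le
      _ = c * η * d := by ring
  rcases le_or_gt (L gs) (L g) with hle | hlt
  · have h2' : 0 ≤ (2 * c / r') * d * η := by positivity
    linarith
  · rw [show (2 * c / r') * d * η = 2 * c * d * η / r' by ring, ← sub_le_iff_le_add',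
      le_div_iff₀ hr0]
    nlinarith
end

section
/- Let Θ = (A^Θ, C^Θ) be a two-layer bias-free ReLU network with input dimension d, m ≤ d hidden neurons, and output dimension D, where the rows a_1^Θ, …, a_m^Θ of A^Θ are linearly independent and every column c_i^Θ of C^Θ is nonzero. Let Φ = (A^Φ, C^Φ) be another such network with the same realization, i.e. C^Φ ReLU(A^Φ x) = C^Θ ReLU(A^Θ x) for all x ∈ ℝ^d. Then there exists a permutation π of {1,…,m} and positive scalars λ_1, …, λ_m such that a_i^Φ = λ_i a_{π(i)}^Θ and c_i^Φ = (1/λ_i) c_{π(i)}^Θ for all i. -/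
/-!
Since `max s 0 + max (-s) 0 = |s|` and `max s 0 - max (-s) 0 = s`, two networks with the same
realization also agree on `x ↦ ∑ i, |φ i x| • c i` and on the linear map `x ↦ ∑ i, φ i x • c i`.
For small `t`, the symmetric second difference of the first function at `x₀` in direction `v` is
`2 |t|` times the sum of `|φ i v| • c i` over the neurons with a kink at `x₀` (`φ i x₀ = 0`), so
these kink sums agree as well. At a point `x₀` of `ker (φ i)` lying on no hyperplane of a neuron
not parallel to `φ i`, the kink sums compare neuron `i` of `Θ` with the neurons of `Φ` parallel to
it; as `c i ≠ 0` one of these is nonzero, and linear independence makes this a bijection between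
the neurons. Writing the matched neuron as `μ • φ i` with outgoing vector `c'`, the kink sums give
`|μ| • c' = c i` and the linear parts give `μ • c' = c i`, so `μ > 0`.
-/

open Filter Topology Finset Module Submodule

section LinearAlgebra

variable {K M ι : Type*} [Field K] [AddCommGroup M] [Module K M]

lemma LinearIndependent.eq_of_mem_span_singleton {v : ι → M} (hv : LinearIndependent K v)
    {i j : ι} (h : v i ∈ K ∙ v j) : i = j := by
  by_contra hne
  exact hv.notMem_span_image (s := {j}) (by simpa using hne) (by simpa using h)

lemma mem_span_singleton_of_ne_zero_of_mem_of_mem {w u u' : M} (hw : w ≠ 0) (hwu : w ∈ K ∙ u)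
    (hwu' : w ∈ K ∙ u') : u ∈ K ∙ u' := by
  obtain ⟨a, rfl⟩ := mem_span_singleton.mp hwu
  exact (smul_mem_iff _ (left_ne_zero_of_smul hw)).mp hwu'

lemma LinearIndependent.exists_equiv_mem_span_singleton_iff [Finite ι] {v w : ι → M}
    (hv : LinearIndependent K v) (h : ∀ i, ∃ k, w k ≠ 0 ∧ w k ∈ K ∙ v i) :
    ∃ τ : ι ≃ ι, ∀ i k, w k ∈ K ∙ v i ↔ k = τ i := by
  choose τ hτ0 hτ using h
  have hinj : Function.Injective τ := fun i j hij =>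
    hv.eq_of_mem_span_singleton
      (mem_span_singleton_of_ne_zero_of_mem_of_mem (hτ0 i) (hτ i) (hij ▸ hτ j))
  let e := Equiv.ofBijective τ (Finite.injective_iff_bijective.mp hinj)
  refine ⟨e, fun i k => ⟨fun hk => ?_, fun hk => hk ▸ hτ i⟩⟩
  obtain ⟨j, rfl⟩ := e.surjective k
  have : v j ∈ K ∙ v i := mem_span_singleton_of_ne_zero_of_mem_of_mem (hτ0 j) (hτ j) hk
  rw [hv.eq_of_mem_span_singleton this]

lemma LinearIndependent.eq_of_forall_sum_apply_smul_eq {N : Type*} [AddCommGroup N] [Module K N]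
    [Fintype ι] {φ : ι → Dual K M} (hφ : LinearIndependent K φ) {w w' : ι → N}
    (h : ∀ x, ∑ i, φ i x • w i = ∑ i, φ i x • w' i) : w = w' := by
  funext i
  rw [← sub_eq_zero, ← forall_dual_apply_eq_zero_iff K]
  intro f
  refine Fintype.linearIndependent_iff.mp hφ (fun i => f (w i - w' i)) (LinearMap.ext fun x => ?_) i
  have := congrArg f (h x)
  simp only [map_sum, map_smul, smul_eq_mul] at this
  simp only [LinearMap.coe_sum, Finset.sum_apply, LinearMap.smul_apply, smul_eq_mul, map_sub,
    sub_mul, sum_sub_distrib, mul_comm (f _), this, sub_self, LinearMap.zero_apply]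

lemma Module.Dual.exists_apply_eq_zero_forall_mem_span_singleton_of_apply_eq_zero [Infinite K]
    [Finite ι] (a : Dual K M) (g : ι → Dual K M) :
    ∃ x, a x = 0 ∧ ∀ i, g i x = 0 → g i ∈ K ∙ a := by
  have hker (i : {i // g i ∉ K ∙ a}) : ∃ x ∈ LinearMap.ker a, g i x ≠ 0 := by
    by_contra! H
    refine i.2 ?_
    simpa using mem_span_of_iInf_ker_le_ker (L := fun _ : Unit => a) (K := g i)
      (fun x hx => H x (by simpa using hx))
  obtain ⟨x, hx, hgx⟩ := Dual.exists_forall_mem_ne_zero_of_forall_exists _ _ hker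
  exact ⟨x, hx, fun i hi => by_contra fun hsp => hgx ⟨i, hsp⟩ hi⟩

end LinearAlgebra

lemma abs_add_add_abs_sub_eq_of_abs_le {s q : ℝ} (h : |q| ≤ |s|) : |s + q| + |s - q| = 2 * |s| := by
  cases abs_cases s <;> cases abs_cases q <;> cases abs_cases (s + q) <;>
    cases abs_cases (s - q) <;> linarith

lemma eventually_abs_add_abs_sub_eq (s p : ℝ) :
    ∀ᶠ t in 𝓝 0, |s + t * p| + |s - t * p| = 2 * |s| + if s = 0 then 2 * |t * p| else 0 := by
  by_cases hs : s = 0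
  · refine Eventually.of_forall fun t => ?_
    rw [if_pos hs, hs, zero_add, zero_sub, abs_neg, abs_zero]
    ring
  · have : Tendsto (fun t : ℝ => |t * p|) (𝓝 0) (𝓝 0) := by
      simpa using ((continuous_mul_const p).abs.tendsto 0)
    filter_upwards [this.eventually (eventually_le_nhds (abs_pos.mpr hs))] with t ht
    rw [if_neg hs, add_zero, abs_add_add_abs_sub_eq_of_abs_le ht]

section ReLU

variable {E F ι κ : Type*} [AddCommGroup E] [Module ℝ E] [AddCommGroup F] [Module ℝ F]
  [Fintype ι] [Fintype κ]

/-- The realization `x ↦ C ReLU(A x)` of the network whose rows of `A` are the linear forms `φ i`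
and whose columns of `C` are the vectors `c i`. -/
noncomputable def reluNet (φ : ι → Dual ℝ E) (c : ι → F) (x : E) : F :=
  ∑ i, max (φ i x) 0 • c i

lemma reluNet_add_reluNet_neg (φ : ι → Dual ℝ E) (c : ι → F) (x : E) :
    reluNet φ c x + reluNet φ c (-x) = ∑ i, |φ i x| • c i := by
  simp only [reluNet, ← sum_add_distrib, map_neg, ← add_smul, max_zero_add_max_neg_zero_eq_abs_self]

lemma reluNet_sub_reluNet_neg (φ : ι → Dual ℝ E) (c : ι → F) (x : E) :
    reluNet φ c x - reluNet φ c (-x) = ∑ i, φ i x • c i := by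
  simp only [reluNet, ← sum_sub_distrib, map_neg, ← sub_smul]
  exact sum_congr rfl fun i _ => congrArg (· • c i) (posPart_sub_negPart (φ i x))

lemma eventually_sum_abs_smul_add_sum_abs_smul_eq (φ : ι → Dual ℝ E) (c : ι → F) (x₀ v : E) :
    ∀ᶠ t in 𝓝 (0 : ℝ), ∑ i, |φ i (x₀ + t • v)| • c i + ∑ i, |φ i (x₀ - t • v)| • c i =
      (2 : ℝ) • ∑ i, |φ i x₀| • c i + (2 * |t|) • ∑ i with φ i x₀ = 0, |φ i v| • c i := by
  filter_upwards [eventually_all.mpr fun i => eventually_abs_add_abs_sub_eq (φ i x₀) (φ i v)]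
    with t ht
  simp only [sum_filter, smul_sum, ← sum_add_distrib, map_add, map_sub, map_smul, smul_eq_mul]
  refine sum_congr rfl fun i _ => ?_
  rw [← add_smul, ht i]
  split_ifs <;> simp only [abs_mul, smul_zero, add_zero] <;> module

lemma sum_filter_abs_smul_eq_of_forall_sum_abs_smul_eq {φ : ι → Dual ℝ E} {c : ι → F}
    {ψ : κ → Dual ℝ E} {d : κ → F} (h : ∀ x, ∑ k, |ψ k x| • d k = ∑ i, |φ i x| • c i)
    (x₀ v : E) :
    ∑ k with ψ k x₀ = 0, |ψ k v| • d k = ∑ i with φ i x₀ = 0, |φ i v| • c i := by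
  obtain ⟨t, ⟨hψ, hφ⟩, ht⟩ := (((eventually_sum_abs_smul_add_sum_abs_smul_eq ψ d x₀ v).and
    (eventually_sum_abs_smul_add_sum_abs_smul_eq φ c x₀ v)).filter_mono nhdsWithin_le_nhds).and
    self_mem_nhdsWithin |>.exists (f := 𝓝[≠] (0 : ℝ))
  rw [h, h, h, hφ, add_right_inj] at hψ
  exact smul_right_injective F (mul_ne_zero two_ne_zero (abs_ne_zero.mpr ht)) hψ.symm

open Classical in
lemma sum_filter_mem_span_singleton_eq {φ : ι → Dual ℝ E} (hφ : LinearIndependent ℝ φ)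
    {c : ι → F} {ψ : κ → Dual ℝ E} {d : κ → F}
    (h : ∀ x, ∑ k, |ψ k x| • d k = ∑ i, |φ i x| • c i) (i : ι) (v : E) :
    ∑ k with ψ k ∈ ℝ ∙ φ i, |ψ k v| • d k = |φ i v| • c i := by
  obtain ⟨x₀, hx₀, hgen⟩ :=
    (φ i).exists_apply_eq_zero_forall_mem_span_singleton_of_apply_eq_zero (Sum.elim ψ φ)
  have hψ : ∀ k, ψ k x₀ = 0 ↔ ψ k ∈ ℝ ∙ φ i := fun k => ⟨hgen (.inl k), fun hk => by
    obtain ⟨a, ha⟩ := mem_span_singleton.mp hk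
    rw [← ha, LinearMap.smul_apply, hx₀, smul_zero]⟩
  have hφ : ∀ j, φ j x₀ = 0 ↔ j = i := fun j =>
    ⟨fun hj => hφ.eq_of_mem_span_singleton (hgen (.inr j) hj), fun hj => hj ▸ hx₀⟩
  have := sum_filter_abs_smul_eq_of_forall_sum_abs_smul_eq h x₀ v
  simpa only [hψ, hφ, sum_filter, sum_ite_eq', mem_univ, if_true] using this

lemma pos_of_abs_smul_eq_of_smul_eq {μ : ℝ} {d c : F} (habs : |μ| • d = c) (h : μ • d = c)
    (hc : c ≠ 0) : 0 < μ := by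
  have hd : d ≠ 0 := by rintro rfl; exact hc (by rw [← h, smul_zero])
  have hμ : μ ≠ 0 := by rintro rfl; exact hc (by rw [← h, zero_smul])
  exact (abs_eq_self.mp (smul_left_injective ℝ hd (habs.trans h.symm))).lt_of_ne' hμ

open Classical in
lemma exists_ne_zero_mem_span_singleton_of_sum_filter_eq {a : Dual ℝ E} {c : F}
    {ψ : κ → Dual ℝ E} {d : κ → F} (ha : a ≠ 0) (hc : c ≠ 0)
    (h : ∀ v, ∑ k with ψ k ∈ ℝ ∙ a, |ψ k v| • d k = |a v| • c) :
    ∃ k, ψ k ≠ 0 ∧ ψ k ∈ ℝ ∙ a := by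
  obtain ⟨v, hv⟩ := DFunLike.ne_iff.mp ha
  obtain ⟨k, hk, hkv⟩ := exists_ne_zero_of_sum_ne_zero
    ((h v).trans_ne (smul_ne_zero (abs_ne_zero.mpr hv) hc))
  exact ⟨k, fun h0 => hkv (by simp [h0]), (mem_filter.mp hk).2⟩

open Classical in
lemma exists_pos_smul_of_mem_span_singleton_iff {φ ψ : ι → Dual ℝ E} {c d : ι → F}
    (hφ : LinearIndependent ℝ φ) (hc : ∀ i, c i ≠ 0) {τ : ι ≃ ι}
    (hτ : ∀ i k, ψ k ∈ ℝ ∙ φ i ↔ k = τ i)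
    (hpar : ∀ i v, ∑ k with ψ k ∈ ℝ ∙ φ i, |ψ k v| • d k = |φ i v| • c i)
    (hlin : ∀ x, ∑ k, ψ k x • d k = ∑ i, φ i x • c i) (i : ι) :
    ∃ μ : ℝ, 0 < μ ∧ ψ (τ i) = μ • φ i ∧ d (τ i) = μ⁻¹ • c i := by
  choose μ hμ using fun i => mem_span_singleton.mp ((hτ i (τ i)).mpr rfl)
  have hsmul : (fun i => μ i • d (τ i)) = c := hφ.eq_of_forall_sum_apply_smul_eq fun x => by
    rw [← hlin x, ← τ.sum_comp fun k => ψ k x • d k]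
    simp only [← hμ, LinearMap.smul_apply, smul_eq_mul, smul_smul, mul_comm]
  have habs : |μ i| • d (τ i) = c i := by
    obtain ⟨v, hv⟩ := DFunLike.ne_iff.mp (hφ.ne_zero i)
    have := hpar i v
    rw [filter_congr fun k _ => hτ i k, sum_filter, sum_ite_eq', if_pos (mem_univ _), ← hμ,
      LinearMap.smul_apply, smul_eq_mul, abs_mul, mul_comm, mul_smul] at this
    exact smul_right_injective F (abs_ne_zero.mpr hv) this
  have hpos : 0 < μ i := pos_of_abs_smul_eq_of_smul_eq habs (congrFun hsmul i) (hc i)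
  exact ⟨μ i, hpos, (hμ i).symm, by rw [← congrFun hsmul i, inv_smul_smul₀ hpos.ne']⟩

theorem exists_perm_smul_of_reluNet_eq {φ ψ : ι → Dual ℝ E} {c d : ι → F}
    (hφ : LinearIndependent ℝ φ) (hc : ∀ i, c i ≠ 0) (h : reluNet ψ d = reluNet φ c) :
    ∃ σ : Equiv.Perm ι, ∃ μ : ι → ℝ, (∀ i, 0 < μ i) ∧ (∀ i, ψ i = μ i • φ (σ i)) ∧
      ∀ i, d i = (μ i)⁻¹ • c (σ i) := by
  have habs (x : E) : ∑ k, |ψ k x| • d k = ∑ i, |φ i x| • c i := by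
    rw [← reluNet_add_reluNet_neg, ← reluNet_add_reluNet_neg, h]
  have hlin (x : E) : ∑ k, ψ k x • d k = ∑ i, φ i x • c i := by
    rw [← reluNet_sub_reluNet_neg, ← reluNet_sub_reluNet_neg, h]
  have hpar := sum_filter_mem_span_singleton_eq hφ habs
  obtain ⟨τ, hτ⟩ := hφ.exists_equiv_mem_span_singleton_iff fun i =>
    exists_ne_zero_mem_span_singleton_of_sum_filter_eq (hφ.ne_zero i) (hc i) (hpar i)
  choose μ hpos hψ hd using exists_pos_smul_of_mem_span_singleton_iff hφ hc hτ hpar hlin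
  refine ⟨τ.symm, fun k => μ (τ.symm k), fun k => hpos _, fun k => ?_, fun k => ?_⟩
  · simpa using hψ (τ.symm k)
  · simpa using hd (τ.symm k)

end ReLU

/-- Uniqueness of parametrization (up to permutation and positive rescaling)
for shallow bias-free ReLU networks with linearly independent weight vectors
and nonzero output columns. -/
theorem stmt_3 {d m D : ℕ}
    (aΘ : Fin m → Fin d → ℝ) (cΘ : Fin m → Fin D → ℝ)
    (aΦ : Fin m → Fin d → ℝ) (cΦ : Fin m → Fin D → ℝ)
    (hind : LinearIndependent ℝ aΘ)
    (hc : ∀ i, cΘ i ≠ 0)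
    (hreal : ∀ x : Fin d → ℝ, ∀ j : Fin D,
      ∑ i, cΦ i j * max (∑ l, aΦ i l * x l) 0 =
        ∑ i, cΘ i j * max (∑ l, aΘ i l * x l) 0) :
    ∃ π : Equiv.Perm (Fin m), ∃ lam : Fin m → ℝ, (∀ i, 0 < lam i) ∧
      (∀ i, aΦ i = lam i • aΘ (π i)) ∧ (∀ i, cΦ i = (lam i)⁻¹ • cΘ (π i)) := by
  let dual := dotProductEquiv ℝ (Fin d)
  have hreal' : reluNet (dual ∘ aΦ) cΦ = reluNet (dual ∘ aΘ) cΘ := by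
    ext x j
    simpa [reluNet, dual, dotProduct, mul_comm] using hreal x j
  obtain ⟨π, lam, hpos, ha, hcΦ⟩ :=
    exists_perm_smul_of_reluNet_eq (hind.map' dual.toLinearMap dual.ker) hc hreal'
  exact ⟨π, lam, hpos, fun i => dual.injective (by simpa using ha i), hcΦ⟩
end

section
/- Let r > 0 and Γ = ((r,0), 0) ∈ ℝ^{1×2} × ℝ^{1×1}, a two-layer bias-free ReLU network with one hidden neuron, whose realization is the zero function. Let g_k(x) = (1/k)·ReLU(⟨(0,1), x⟩). Then for every k ∈ ℕ and every parametrization Φ_k = (a, c) ∈ ℝ^{1×2} × ℝ^{1×1} with realization g_k, it holds that the Sobolev seminorm |g_k − 0|_{W^{1,∞}} = 1/k while ‖Φ_k − Γ‖_∞ ≥ r. -/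
open MeasureTheory

/-- The Sobolev `W^{1,∞}` seminorm: essential supremum of the max-norm of the
(a.e.) gradient. -/
noncomputable def sobSemi (d : ℕ) (f : (Fin d → ℝ) → ℝ) : ℝ :=
  essSup (fun x => ⨆ j : Fin d, |fderiv ℝ f x (Pi.single j 1)|) volume

private lemma ciSup_fin2 (u : Fin 2 → ℝ) : (⨆ j, u j) = max (u 0) (u 1) := by
  apply le_antisymm
  · apply ciSup_le; intro j; fin_cases j
    · exact le_max_left _ _
    · exact le_max_right _ _
  · apply max_le <;> exact le_ciSup (Set.finite_range u).bddAbove _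

/-- Failure of inverse stability due to complete unbalancedness:
`Γ = ((r,0),0)` realizes the zero function, `g_k(x) = (1/k)ReLU(x₂)` is
Sobolev-close to it, yet every parametrization of `g_k` is at parameter
distance at least `r` from `Γ`. -/
theorem stmt_6 (r : ℝ) (hr : 0 < r) (k : ℕ) (hk : 1 ≤ k)
    (a : Fin 2 → ℝ) (c : ℝ)
    (hreal : ∀ x : Fin 2 → ℝ,
      c * max (a 0 * x 0 + a 1 * x 1) 0 = (1 / (k : ℝ)) * max (x 1) 0) :
    sobSemi 2 (fun x => (1 / (k : ℝ)) * max (x 1) 0 - 0) = 1 / k ∧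
      max (max |a 0 - r| |a 1 - 0|) |c - 0| ≥ r := by
  have hk0 : (0 : ℝ) < 1 / k := by
    have : (0 : ℝ) < k := by exact_mod_cast hk
    positivity
  constructor
  · unfold sobSemi
    have hfun : (fun x : Fin 2 → ℝ => (1 / (k : ℝ)) * max (x 1) 0 - 0)
        = (fun x : Fin 2 → ℝ => (1 / (k : ℝ)) * max (x 1) 0) := by
      funext x; ring
    rw [hfun]
    set f : (Fin 2 → ℝ) → ℝ := fun x => (1 / (k : ℝ)) * max (x 1) 0 with hf
    set g : (Fin 2 → ℝ) → ℝ := fun x => ⨆ j : Fin 2, |fderiv ℝ f x (Pi.single j 1)|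
      with hg
    set h : (Fin 2 → ℝ) → ℝ := fun x => if 0 < x 1 then 1 / k else 0 with hh
    -- derivative on the positive side
    have hpos : ∀ x : Fin 2 → ℝ, 0 < x 1 → g x = 1 / k := by
      intro x hx
      have hopen : IsOpen {y : Fin 2 → ℝ | 0 < y 1} :=
        isOpen_lt continuous_const (continuous_apply 1)
      have hev : (fun y : Fin 2 → ℝ => (1 / (k : ℝ)) * y 1) =ᶠ[nhds x] f := by
        filter_upwards [hopen.mem_nhds hx] with y hy
        simp [hf, max_eq_left (le_of_lt hy)]
      have hL : HasFDerivAt (fun y : Fin 2 → ℝ => (1 / (k : ℝ)) * y 1)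
          ((1 / (k : ℝ)) • (ContinuousLinearMap.proj 1 : (Fin 2 → ℝ) →L[ℝ] ℝ)) x := by
        exact ((ContinuousLinearMap.proj 1 : (Fin 2 → ℝ) →L[ℝ] ℝ)).hasFDerivAt.const_mul _
      have hdf : fderiv ℝ f x
          = (1 / (k : ℝ)) • (ContinuousLinearMap.proj 1 : (Fin 2 → ℝ) →L[ℝ] ℝ) :=
        (hL.congr_of_eventuallyEq hev.symm).fderiv
      have : ∀ j : Fin 2, fderiv ℝ f x (Pi.single j 1) = (1 / (k : ℝ)) * (Pi.single j 1 : Fin 2 → ℝ) 1 := by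
        intro j; rw [hdf]; simp [ContinuousLinearMap.proj]
      rw [hg]
      simp only [this]
      rw [ciSup_fin2]
      simp [Pi.single_apply, abs_of_pos hk0]
    -- derivative on the negative side
    have hneg : ∀ x : Fin 2 → ℝ, x 1 < 0 → g x = 0 := by
      intro x hx
      have hopen : IsOpen {y : Fin 2 → ℝ | y 1 < 0} :=
        isOpen_lt (continuous_apply 1) continuous_const
      have hev : (fun _ : Fin 2 → ℝ => (0 : ℝ)) =ᶠ[nhds x] f := by
        filter_upwards [hopen.mem_nhds hx] with y hy
        simp [hf, max_eq_right (le_of_lt hy)]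
      have hL : HasFDerivAt (fun _ : Fin 2 → ℝ => (0 : ℝ))
          (0 : (Fin 2 → ℝ) →L[ℝ] ℝ) x := hasFDerivAt_const 0 x
      have hdf : fderiv ℝ f x = 0 := (hL.congr_of_eventuallyEq hev.symm).fderiv
      rw [hg]
      simp only [hdf]
      rw [ciSup_fin2]
      simp
    -- g = h a.e.
    have hnull : volume {x : Fin 2 → ℝ | x 1 = 0} = 0 := by
      rw [volume_pi]
      exact Measure.pi_hyperplane _ 1 0
    have hae : g =ᵐ[volume] h := by
      have : ∀ᵐ x : Fin 2 → ℝ ∂volume, x 1 ≠ 0 := compl_mem_ae_iff.2 hnull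
      filter_upwards [this] with x hx
      rcases lt_or_gt_of_ne hx with hlt | hgt
      · rw [hneg x hlt, hh]; simp [not_lt.mpr (le_of_lt hlt), hlt.not_gt]
      · rw [hpos x hgt, hh]; simp [hgt]
    rw [essSup_congr_ae hae, essSup_eq_sInf]
    have hset : {a : ℝ | volume {x : Fin 2 → ℝ | a < h x} = 0} = Set.Ici (1 / (k : ℝ)) := by
      ext b
      simp only [Set.mem_setOf_eq, Set.mem_Ici]
      constructor
      · intro hb
        by_contra hcon
        push_neg at hcon
        have hsub : {x : Fin 2 → ℝ | 0 < x 1} ⊆ {x : Fin 2 → ℝ | b < h x} := by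
          intro x hx
          simp only [Set.mem_setOf_eq]
          have hx1 : 0 < x 1 := hx
          have hx' : h x = 1 / k := if_pos hx1
          rw [hx']
          exact hcon
        have hopen : IsOpen {x : Fin 2 → ℝ | 0 < x 1} :=
          isOpen_lt continuous_const (continuous_apply 1)
        have hne : {x : Fin 2 → ℝ | 0 < x 1}.Nonempty :=
          ⟨fun _ => 1, by simp⟩
        have := (hopen.measure_pos volume hne).trans_le (measure_mono hsub)
        exact this.ne' hb
      · intro hb
        have : {x : Fin 2 → ℝ | b < h x} = ∅ := by
          ext x
          simp only [Set.mem_setOf_eq, Set.mem_empty_iff_false, iff_false, not_lt, hh]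
          split
          · exact hb
          · exact le_trans (le_of_lt hk0) hb
        rw [this]; simp
    rw [hset, csInf_Ici]
  · -- parameter distance
    have h1 := hreal ![0, 1]
    have h2 := hreal ![1, 0]
    have h3 := hreal ![-1, 0]
    simp only [Matrix.cons_val_zero, Matrix.cons_val_one, Matrix.head_cons] at h1 h2 h3
    have h1' : c * max (a 1) 0 = 1 / k := by
      simpa using h1
    have hc : c ≠ 0 := by
      intro hc0
      rw [hc0, zero_mul] at h1'
      exact hk0.ne h1'
    have h2' : max (a 0) 0 = 0 := by
      have : c * max (a 0) 0 = 0 := by simpa using h2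
      exact (mul_eq_zero.mp this).resolve_left hc
    have h3' : max (-(a 0)) 0 = 0 := by
      have : c * max (-(a 0)) 0 = 0 := by simpa using h3
      exact (mul_eq_zero.mp this).resolve_left hc
    have ha0 : a 0 = 0 := by
      have hle : a 0 ≤ 0 := by
        by_contra hcon
        push_neg at hcon
        rw [max_eq_left (le_of_lt hcon)] at h2'
        exact hcon.ne' h2'
      have hge : 0 ≤ a 0 := by
        by_contra hcon
        push_neg at hcon
        rw [max_eq_left (le_of_lt (neg_pos.mpr hcon))] at h3'
        exact (neg_pos.mpr hcon).ne' h3'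
      exact le_antisymm hle hge
    have : |a 0 - r| = r := by
      rw [ha0, zero_sub, abs_neg, abs_of_pos hr]
    calc r = |a 0 - r| := this.symm
      _ ≤ max |a 0 - r| |a 1 - 0| := le_max_left _ _
      _ ≤ max (max |a 0 - r| |a 1 - 0|) |c - 0| := le_max_left _ _
end

section
/- Let Γ = ([1 0; 1 0], (1,1)) ∈ ℝ^{2×2} × ℝ^{1×2}, so R(Γ)(x) = 2·ReLU(x₁). Let g_k(x) = 2·ReLU(⟨(1,0),x⟩) + (1/k)·ReLU(⟨(0,1),x⟩). Then for every k ∈ ℕ and every Φ_k ∈ ℝ^{2×2} × ℝ^{1×2} with realization g_k, it holds that |g_k − R(Γ)|_{W^{1,∞}} = 1/k while ‖Φ_k − Γ‖_∞ ≥ 1. -/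
/-!
On the open half-space `x₂ > 0` the difference `g_k - R(Γ) = (1/k)·ReLU(x₂)` has gradient
`(0, 1/k)`, on `x₂ < 0` it is locally zero, and the hyperplane `x₂ = 0` is Lebesgue-null; hence
the seminorm is exactly `1/k`.

For the parameter bound, suppose every first-layer row `A i` had `A i 0 > 0`. For `t` large, all
pre-activations at `(t, s)` with `|s| ≤ 1` are positive, so the network is affine in `s` there,
whereas `g_k(t, s)` has a kink at `s = 0` of size `1/k ≠ 0`. So some row has `A i 0 ≤ 0`, which
is at distance at least `1` from the row `(1, 0)` of `Γ`.
-/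

open MeasureTheory

open Filter Topology

theorem essSup_eq_of_ae_le_of_measure_ne_zero {α : Type*} [MeasurableSpace α] {μ : Measure α}
    {f : α → ℝ} {c : ℝ} (hle : ∀ᵐ x ∂μ, f x ≤ c) (hc : μ {x | f x = c} ≠ 0) :
    essSup f μ = c := by
  rw [essSup_eq_sInf]
  refine IsLeast.csInf_eq ⟨?_, fun a ha => ?_⟩
  · show μ {x | c < f x} = 0
    simpa only [ae_iff, not_le] using hle
  · by_contra! hac
    exact hc (measure_mono_null (fun x (hx : f x = c) => (hx ▸ hac : a < f x)) ha)

theorem ae_apply_ne_zero {d : ℕ} (j : Fin d) : ∀ᵐ x : Fin d → ℝ, x j ≠ 0 := by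
  have hker : LinearMap.ker (LinearMap.proj j : (Fin d → ℝ) →ₗ[ℝ] ℝ) ≠ ⊤ := fun h => by
    simpa using LinearMap.congr_fun (LinearMap.ker_eq_top.mp h) (Pi.single j 1)
  rw [ae_iff]
  simp only [not_not]
  exact Measure.addHaar_submodule volume _ hker

theorem fderiv_const_mul_max_zero_apply {d : ℕ} (a : ℝ) (j : Fin d) {x : Fin d → ℝ} (hx : x j ≠ 0)
    (v : Fin d → ℝ) :
    fderiv ℝ (fun y : Fin d → ℝ => a * max (y j) 0) x v = if 0 < x j then a * v j else 0 := by
  rcases hx.lt_or_gt with hneg | hpos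
  · have hloc : (fun y : Fin d → ℝ => a * max (y j) 0) =ᶠ[𝓝 x] fun _ => 0 := by
      filter_upwards [(isOpen_lt (continuous_apply j) continuous_const).mem_nhds hneg] with y hy
      simp [max_eq_right (le_of_lt hy)]
    simp [hloc.fderiv_eq, hneg.not_gt]
  · have hloc : (fun y : Fin d → ℝ => a * max (y j) 0) =ᶠ[𝓝 x] fun y => a * y j := by
      filter_upwards [(isOpen_lt continuous_const (continuous_apply j)).mem_nhds hpos] with y hy
      rw [max_eq_left hy.le]
    rw [hloc.fderiv_eq, ((hasFDerivAt_apply j x).const_mul a).fderiv]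
    simp [hpos]

theorem ciSup_abs_mul_single_apply {ι : Type*} [Fintype ι] [DecidableEq ι] (a : ℝ) (j : ι) :
    ⨆ i, |a * Pi.single (M := fun _ => ℝ) i 1 j| = |a| := by
  have : Nonempty ι := ⟨j⟩
  refine le_antisymm (ciSup_le fun i => ?_) ?_
  · rw [Pi.single_apply]; split_ifs <;> simp
  · exact le_ciSup_of_le (Finite.bddAbove_range _) j (by simp)

theorem sobSemi_const_mul_max_zero {d : ℕ} (j : Fin d) {a : ℝ} (ha : 0 ≤ a) :
    sobSemi d (fun x => a * max (x j) 0) = a := by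
  have hgrad : ∀ x : Fin d → ℝ, x j ≠ 0 →
      ⨆ i : Fin d, |fderiv ℝ (fun y : Fin d → ℝ => a * max (y j) 0) x (Pi.single i 1)| =
        if 0 < x j then a else 0 := by
    intro x hx
    simp only [fderiv_const_mul_max_zero_apply a j hx]
    split_ifs
    · rw [ciSup_abs_mul_single_apply, abs_of_nonneg ha]
    · have : Nonempty (Fin d) := ⟨j⟩
      simp
  refine essSup_eq_of_ae_le_of_measure_ne_zero ?_ ?_
  · filter_upwards [ae_apply_ne_zero j] with x hx
    rw [hgrad x hx]
    split_ifs <;> linarith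
  · refine ne_of_gt (lt_of_lt_of_le ?_ (measure_mono fun x (hx : 0 < x j) => ?_))
    · exact (isOpen_lt continuous_const (continuous_apply j)).measure_pos volume
        ⟨Pi.single j 1, by simp⟩
    · simp only [Set.mem_ofPred_eq, hgrad x hx.ne', if_pos hx]

def shallowReLU {n d : ℕ} (A : Fin n → Fin d → ℝ) (c : Fin n → ℝ) (x : Fin d → ℝ) : ℝ :=
  ∑ i, c i * max (∑ j, A i j * x j) 0

theorem exists_weight_nonpos_of_shallowReLU_eq {n : ℕ} (A : Fin n → Fin 2 → ℝ) (c : Fin n → ℝ)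
    {a b : ℝ} (hb : b ≠ 0)
    (hreal : ∀ x, shallowReLU A c x = a * max (x 0) 0 + b * max (x 1) 0) :
    ∃ i, A i 0 ≤ 0 := by
  by_contra! hA
  obtain ⟨t, ht, htA⟩ : ∃ t : ℝ, 0 < t ∧ ∀ i, |A i 1| < A i 0 * t :=
    ((eventually_gt_atTop 0).and (eventually_all.2 fun i =>
      (tendsto_id.const_mul_atTop (hA i)).eventually_gt_atTop |A i 1|)).exists
  have hlin : ∀ s : ℝ, |s| ≤ 1 →
      shallowReLU A c ![t, s] = ∑ i, c i * (A i 0 * t + A i 1 * s) := by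
    intro s hs
    refine Finset.sum_congr rfl fun i _ => ?_
    have hslope : |A i 1 * s| ≤ |A i 1| := by
      rw [abs_mul]; exact mul_le_of_le_one_right (abs_nonneg _) hs
    simp only [Fin.sum_univ_two, Matrix.cons_val_zero, Matrix.cons_val_one]
    rw [max_eq_left (by linarith [neg_abs_le (A i 1 * s), htA i])]
  have hmid : shallowReLU A c ![t, 1] + shallowReLU A c ![t, -1] =
      2 * shallowReLU A c ![t, 0] := by
    rw [hlin 1 (by norm_num), hlin (-1) (by norm_num), hlin 0 (by norm_num), Finset.mul_sum,
      ← Finset.sum_add_distrib]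
    exact Finset.sum_congr rfl fun i _ => by ring
  simp only [hreal, Matrix.cons_val_zero, Matrix.cons_val_one, max_eq_left ht.le] at hmid
  norm_num at hmid
  exact hb (by linarith)

/-- Failure of inverse stability due to redundant directions: `Γ` has both
first-layer rows equal to `(1,0)` and output weights `(1,1)`, so
`R(Γ)(x) = 2·ReLU(x₁)`; `g_k = 2·ReLU(x₁) + (1/k)·ReLU(x₂)` is Sobolev-close,
yet every parametrization of `g_k` is at distance at least `1` from `Γ`. -/
theorem stmt_7 (k : ℕ) (hk : 1 ≤ k)
    (A : Fin 2 → Fin 2 → ℝ) (c : Fin 2 → ℝ)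
    (hreal : ∀ x : Fin 2 → ℝ,
      ∑ i, c i * max (∑ j, A i j * x j) 0 =
        2 * max (x 0) 0 + (1 / (k : ℝ)) * max (x 1) 0) :
    sobSemi 2 (fun x =>
        (2 * max (x 0) 0 + (1 / (k : ℝ)) * max (x 1) 0) - 2 * max (x 0) 0) = 1 / k ∧
      max (⨆ i : Fin 2, ⨆ j : Fin 2, |A i j - (if j = 0 then 1 else 0)|)
          (⨆ i : Fin 2, |c i - 1|) ≥ 1 := by
  refine ⟨?_, ?_⟩
  · have hdiff : (fun x : Fin 2 → ℝ =>
        (2 * max (x 0) 0 + (1 / (k : ℝ)) * max (x 1) 0) - 2 * max (x 0) 0) =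
          fun x => (1 / (k : ℝ)) * max (x 1) 0 := by
      funext x; ring
    rw [hdiff]
    exact sobSemi_const_mul_max_zero 1 (by positivity)
  · have hkink : (1 / (k : ℝ)) ≠ 0 := one_div_ne_zero (Nat.cast_ne_zero.2 (by omega))
    obtain ⟨i, hi⟩ := exists_weight_nonpos_of_shallowReLU_eq A c hkink hreal
    calc (1 : ℝ) ≤ |A i 0 - if (0 : Fin 2) = 0 then 1 else 0| := by
          rw [if_pos rfl, abs_of_nonpos (by linarith)]; linarith
      _ ≤ ⨆ j : Fin 2, |A i j - if j = 0 then 1 else 0| :=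
          le_ciSup (f := fun j : Fin 2 => |A i j - if j = 0 then 1 else 0|)
            (Finite.bddAbove_range _) 0
      _ ≤ ⨆ i : Fin 2, ⨆ j : Fin 2, |A i j - if j = 0 then 1 else 0| :=
          le_ciSup (f := fun i : Fin 2 => ⨆ j : Fin 2, |A i j - if j = 0 then 1 else 0|)
            (Finite.bddAbove_range _) i
      _ ≤ _ := le_max_left _ _
end

section
/- Let a_1, …, a_m ∈ ℝ^d be pairwise linearly independent with ‖a_i‖_∞ = 1 and Σ_i a_i = 0, and define Γ with first-layer rows a_1, …, a_m, −a_1, …, −a_m and output weights (1,…,1,−1,…,−1); then R(Γ) = 0. Let v ∈ ℝ^d with ‖v‖_∞ = 1 be linearly independent to each a_i, and g_k(x) = (1/k)·ReLU(⟨v, x⟩). Then there exists a constant C > 0 (independent of k) such that for every k and every parametrization Φ_k with architecture (d, 2m, 1) realizing g_k, we have |g_k − R(Γ)|_{W^{1,∞}} = 1/k while ‖Φ_k − Γ‖_∞ ≥ C; one may take C² = (1/d²)·min_i (‖a_i‖₂²‖v‖₂² − ⟨a_i, v⟩²). -/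
/-!
Opposite rows cancel, since `ReLU t - ReLU (-t) = t`: `Γ` realizes `x ↦ ⟨∑ i, a i, x⟩ = 0`, so
`g_k - R(Γ) = g_k`, whose gradient is `v / k` on one half-space and `0` on the other.

If no first-layer row of a parametrization of `g_k` were parallel to `v`, some point `x₀` of the
hyperplane `v^⊥` would avoid the finitely many hyperplanes `(b i)^⊥`; near `x₀` the network is then
affine, while `g_k` has a kink there. Hence some row equals `μ • v`, and its distance to the row
`± a j` of `Γ` is at least the distance from `a j` to the line `ℝ v`, whose square is the Gram
determinant `‖a j‖₂² ‖v‖₂² - ⟨a j, v⟩²` divided by `‖v‖₂²`. Passing between `‖·‖₂` and `‖·‖∞`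
costs the factor `d²`.
-/

open MeasureTheory

open Filter Topology

section DotProduct

variable {n : Type*} [Fintype n]

lemma dotProduct_self_pos {w : n → ℝ} (hw : w ≠ 0) : 0 < w ⬝ᵥ w :=
  (Fintype.sum_nonneg fun i => mul_self_nonneg (w i)).lt_of_ne' (dotProduct_self_eq_zero.not.2 hw)

lemma iSup_abs_eq_norm (w : n → ℝ) : ⨆ i, |w i| = ‖w‖ := by
  cases isEmpty_or_nonempty n
  · simp [Real.iSup_of_isEmpty, Subsingleton.elim w 0]
  · have h := (IsGreatest.pi_norm w).csSup_eq
    simp only [Real.norm_eq_abs] at h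
    exact h

lemma dotProduct_self_le_card_mul_norm_sq (w : n → ℝ) :
    w ⬝ᵥ w ≤ Fintype.card n * ‖w‖ ^ 2 := by
  refine (Finset.sum_le_card_nsmul Finset.univ (fun i => w i * w i) (‖w‖ ^ 2)
    fun i _ => ?_).trans_eq (by simp)
  simpa [← sq, sq_abs] using pow_le_pow_left₀ (abs_nonneg (w i)) (norm_le_pi_norm w i) 2

lemma dotProduct_sub_smul_self (w u : n → ℝ) (μ : ℝ) :
    (w - μ • u) ⬝ᵥ (w - μ • u) = w ⬝ᵥ w - 2 * μ * (w ⬝ᵥ u) + μ ^ 2 * (u ⬝ᵥ u) := by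
  simp only [sub_dotProduct, dotProduct_sub, smul_dotProduct, dotProduct_smul, smul_eq_mul,
    dotProduct_comm u w]
  ring

lemma gram_le_dotProduct_sub_smul_self_mul (w u : n → ℝ) (μ : ℝ) :
    (w ⬝ᵥ w) * (u ⬝ᵥ u) - (w ⬝ᵥ u) ^ 2 ≤ ((w - μ • u) ⬝ᵥ (w - μ • u)) * (u ⬝ᵥ u) := by
  rw [dotProduct_sub_smul_self]
  nlinarith [sq_nonneg (w ⬝ᵥ u - μ * (u ⬝ᵥ u))]

lemma gram_pos {w u : n → ℝ} (hw : w ≠ 0) (hu : ∀ μ : ℝ, u ≠ μ • w) :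
    0 < (w ⬝ᵥ w) * (u ⬝ᵥ u) - (w ⬝ᵥ u) ^ 2 := by
  have hww := dotProduct_self_pos hw
  have key : (w ⬝ᵥ w) * (u ⬝ᵥ u) - (w ⬝ᵥ u) ^ 2 = (w ⬝ᵥ w) *
      ((u - (w ⬝ᵥ u / w ⬝ᵥ w) • w) ⬝ᵥ (u - (w ⬝ᵥ u / w ⬝ᵥ w) • w)) := by
    rw [dotProduct_sub_smul_self, dotProduct_comm u w]
    field_simp
    ring
  rw [key]
  exact mul_pos hww (dotProduct_self_pos (sub_ne_zero.2 (hu _)))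

lemma gram_le_card_sq_mul (w u : n → ℝ) (μ : ℝ) :
    (w ⬝ᵥ w) * (u ⬝ᵥ u) - (w ⬝ᵥ u) ^ 2 ≤ Fintype.card n ^ 2 * ‖w - μ • u‖ ^ 2 * ‖u‖ ^ 2 :=
  calc _ ≤ ((w - μ • u) ⬝ᵥ (w - μ • u)) * (u ⬝ᵥ u) := gram_le_dotProduct_sub_smul_self_mul w u μ
    _ ≤ (Fintype.card n * ‖w - μ • u‖ ^ 2) * (Fintype.card n * ‖u‖ ^ 2) :=
      mul_le_mul (dotProduct_self_le_card_mul_norm_sq _) (dotProduct_self_le_card_mul_norm_sq _)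
        (Fintype.sum_nonneg fun i => mul_self_nonneg (u i)) (by positivity)
    _ = _ := by ring

lemma ae_dotProduct_ne_zero {w : n → ℝ} (hw : w ≠ 0) : ∀ᵐ x : n → ℝ, w ⬝ᵥ x ≠ 0 := by
  have hker : LinearMap.ker (dotProductBilin ℝ ℝ w) ≠ ⊤ := fun h =>
    (dotProduct_self_pos hw).ne' (LinearMap.mem_ker.1 (h ▸ Submodule.mem_top : w ∈ _))
  rw [ae_iff]
  simp only [not_not]
  exact Measure.addHaar_submodule volume _ hker

lemma exists_forall_dotProduct_ne_zero {ι : Type*} [Countable ι] {w : ι → n → ℝ}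
    (hw : ∀ i, w i ≠ 0) : ∃ x : n → ℝ, ∀ i, w i ⬝ᵥ x ≠ 0 :=
  (ae_all_iff.2 fun i => ae_dotProduct_ne_zero (hw i)).exists

lemma norm_le_iSup_iSup_abs {ι : Type*} [Finite ι] (w : ι → n → ℝ) (i : ι) :
    ‖w i‖ ≤ ⨆ i, ⨆ l, |w i l| :=
  (iSup_abs_eq_norm (w i)).symm.trans_le
    (le_ciSup (f := fun i => ⨆ l, |w i l|) (Set.finite_range _).bddAbove i)

lemma exists_norm_smul_sub_opposite_eq {ι : Type*} (a : ι → n → ℝ) (v : n → ℝ) (μ : ℝ)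
    (i : ι ⊕ ι) :
    ∃ j, ∃ μ' : ℝ, ‖μ • v - Sum.elim a (fun i => -a i) i‖ = ‖a j - μ' • v‖ := by
  rcases i with j | j
  · exact ⟨j, μ, by rw [Sum.elim_inl, norm_sub_rev]⟩
  · exact ⟨j, -μ, by rw [Sum.elim_inr, neg_smul, sub_neg_eq_add, sub_neg_eq_add, add_comm]⟩

end DotProduct

lemma max_add_zero_add_max_sub_zero {s t : ℝ} (h : |t| < |s|) :
    max (s + t) 0 + max (s - t) 0 = 2 * max s 0 := by
  obtain ⟨h₁, h₂⟩ := abs_lt.1 h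
  rcases le_total 0 s with hs | hs
  · rw [abs_of_nonneg hs] at h₁ h₂
    rw [max_eq_left (by linarith), max_eq_left (by linarith), max_eq_left hs]
    ring
  · rw [abs_of_nonpos hs] at h₁ h₂
    rw [max_eq_right (by linarith), max_eq_right (by linarith), max_eq_right hs]
    ring

section Realization

variable {ι n : Type*} [Fintype ι] [Fintype n]

def realization (b : ι → n → ℝ) (c : ι → ℝ) (x : n → ℝ) : ℝ :=
  ∑ i, c i * max (b i ⬝ᵥ x) 0

lemma realization_opposite_eq_zero {a : ι → n → ℝ} (hsum : ∑ i, a i = 0) (x : n → ℝ) :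
    realization (Sum.elim a fun i => -a i) (Sum.elim (fun _ => 1) fun _ => -1) x = 0 := by
  simp only [realization, Fintype.sum_sum_type, Sum.elim_inl, Sum.elim_inr, one_mul, neg_mul,
    neg_dotProduct, Finset.sum_neg_distrib, ← sub_eq_add_neg, ← Finset.sum_sub_distrib,
    max_zero_sub_max_neg_zero_eq_self, ← sum_dotProduct, hsum, zero_dotProduct]

/-- Near a point where no neuron is at its kink, the network is affine. -/
lemma eventually_realization_add_add_realization_sub (b : ι → n → ℝ) (c : ι → ℝ)
    {x₀ : n → ℝ} (hx₀ : ∀ i, b i ⬝ᵥ x₀ ≠ 0) (y : n → ℝ) :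
    ∀ᶠ t in 𝓝 (0 : ℝ),
      realization b c (x₀ + t • y) + realization b c (x₀ - t • y) = 2 * realization b c x₀ := by
  have hsmall : ∀ᶠ t in 𝓝 (0 : ℝ), ∀ i, |t * (b i ⬝ᵥ y)| < |b i ⬝ᵥ x₀| :=
    eventually_all.2 fun i => (continuous_id.mul continuous_const).abs.continuousAt.eventually_lt
      continuousAt_const (by simpa using hx₀ i)
  filter_upwards [hsmall] with t ht
  simp only [realization, ← Finset.sum_add_distrib, Finset.mul_sum, dotProduct_add,
    dotProduct_sub, dotProduct_smul, smul_eq_mul, ← mul_add, max_add_zero_add_max_sub_zero (ht _)]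
  exact Finset.sum_congr rfl fun i _ => by ring

theorem exists_eq_smul_of_realization_eq {b : ι → n → ℝ} {c : ι → ℝ} {v : n → ℝ} (hv : v ≠ 0)
    {α : ℝ} (hα : α ≠ 0) (h : ∀ x, realization b c x = α * max (v ⬝ᵥ x) 0) :
    ∃ i, ∃ μ : ℝ, b i = μ • v := by
  by_contra! hpar
  have hvv := dotProduct_self_pos hv
  have hw : ∀ i, (v ⬝ᵥ v) • b i - (b i ⬝ᵥ v) • v ≠ 0 := fun i hi => hpar i (b i ⬝ᵥ v / v ⬝ᵥ v) <| by
    rw [sub_eq_zero] at hi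
    rw [div_eq_inv_mul, mul_smul, ← hi, smul_smul, inv_mul_cancel₀ hvv.ne', one_smul]
  obtain ⟨x, hx⟩ := exists_forall_dotProduct_ne_zero hw
  -- a multiple of the projection of `x` onto `v^⊥`: on the target's kink, on no neuron's kink
  set x₀ := (v ⬝ᵥ v) • x - (v ⬝ᵥ x) • v
  have hvx₀ : v ⬝ᵥ x₀ = 0 := by
    simp only [x₀, dotProduct_sub, dotProduct_smul, smul_eq_mul]
    ring
  have hbx₀ : ∀ i, b i ⬝ᵥ x₀ ≠ 0 := fun i => by
    convert hx i using 1
    simp only [x₀, dotProduct_sub, sub_dotProduct, dotProduct_smul, smul_dotProduct, smul_eq_mul]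
    ring
  obtain ⟨t, ht, htpos⟩ := ((eventually_realization_add_add_realization_sub b c hbx₀ v).filter_mono
    nhdsWithin_le_nhds |>.and (self_mem_nhdsWithin : ∀ᶠ t in 𝓝[>] (0 : ℝ), 0 < t)).exists
  simp only [h, dotProduct_add, dotProduct_sub, dotProduct_smul, hvx₀, smul_eq_mul, zero_add,
    zero_sub, max_self, mul_zero] at ht
  rw [max_eq_left (by positivity), max_eq_right (by nlinarith), mul_zero, add_zero] at ht
  exact mul_ne_zero hα (mul_pos htpos hvv).ne' ht

end Realization

lemma essSup_eq_of_ae_le_of_frequently_ge {α : Type*} [MeasurableSpace α] {μ : Measure α}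
    {f : α → ℝ} {c : ℝ} (hle : ∀ᵐ x ∂μ, f x ≤ c) (hge : ∃ᵐ x ∂μ, c ≤ f x) : essSup f μ = c :=
  le_antisymm (limsup_le_of_le (IsCoboundedUnder.of_frequently_ge hge) hle)
    (le_limsup_of_frequently_le hge (isBoundedUnder_of_eventually_le hle))

lemma iSup_abs_fderiv_single_eq {d : ℕ} {f : (Fin d → ℝ) → ℝ} {x : Fin d → ℝ} {v : Fin d → ℝ}
    {β : ℝ} (h : f =ᶠ[𝓝 x] fun y => β * (v ⬝ᵥ y)) :
    ⨆ j, |fderiv ℝ f x (Pi.single j 1)| = |β| * ‖v‖ := by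
  let L : (Fin d → ℝ) →L[ℝ] ℝ := LinearMap.toContinuousLinearMap (dotProductBilin ℝ ℝ v)
  have hL : HasFDerivAt (fun y => β * (v ⬝ᵥ y)) (β • L) x := L.hasFDerivAt.const_mul β
  rw [h.fderiv_eq, hL.fderiv, ← iSup_abs_eq_norm,
    Real.mul_iSup_of_nonneg (abs_nonneg β)]
  simp [L, abs_mul]

lemma sobSemi_mul_relu {d : ℕ} {v : Fin d → ℝ} (hv : v ≠ 0) {α : ℝ} (hα : 0 ≤ α) :
    sobSemi d (fun x => α * max (v ⬝ᵥ x) 0) = α * ‖v‖ := by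
  have hcont : Continuous fun y : Fin d → ℝ => v ⬝ᵥ y := continuous_const.dotProduct continuous_id
  have hpos : ∀ x, 0 < v ⬝ᵥ x →
      ⨆ j, |fderiv ℝ (fun x => α * max (v ⬝ᵥ x) 0) x (Pi.single j 1)| = α * ‖v‖ := fun x hx => by
    rw [iSup_abs_fderiv_single_eq (β := α), abs_of_nonneg hα]
    filter_upwards [(isOpen_lt continuous_const hcont).mem_nhds hx] with y hy
    rw [max_eq_left hy.le]
  have hneg : ∀ x, v ⬝ᵥ x < 0 →
      ⨆ j, |fderiv ℝ (fun x => α * max (v ⬝ᵥ x) 0) x (Pi.single j 1)| = 0 := fun x hx => by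
    rw [iSup_abs_fderiv_single_eq (β := 0) (v := v), abs_zero, zero_mul]
    filter_upwards [(isOpen_lt hcont continuous_const).mem_nhds hx] with y hy
    rw [max_eq_right hy.le, mul_zero, zero_mul]
  apply essSup_eq_of_ae_le_of_frequently_ge
  · filter_upwards [ae_dotProduct_ne_zero hv] with x hx
    rcases hx.lt_or_gt with hx | hx
    · rw [hneg x hx]; positivity
    · rw [hpos x hx]
  · refine frequently_ae_iff.2 (ne_bot_of_le_ne_bot ?_ (measure_mono fun x hx => (hpos x hx).ge))
    exact ((isOpen_lt continuous_const hcont).measure_pos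
      volume ⟨v, dotProduct_self_pos hv⟩).ne'

theorem stmt_8_general (d m : ℕ) (hm : 0 < m)
    (a : Fin m → Fin d → ℝ) (v : Fin d → ℝ)
    (hnorm : ∀ i, ‖a i‖ = 1) (hvnorm : ‖v‖ = 1)
    (hsum : ∑ i, a i = 0)
    (hv : ∀ i, ∀ μ : ℝ, v ≠ μ • a i) :
    ∃ C : ℝ, 0 < C ∧
      C ^ 2 = (1 / (d : ℝ) ^ 2) *
        (Finset.univ.inf' (Finset.univ_nonempty_iff.mpr ⟨⟨0, hm⟩⟩) fun i =>
          (∑ l, (a i l) ^ 2) * (∑ l, (v l) ^ 2) - (∑ l, a i l * v l) ^ 2) ∧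
      ∀ k : ℕ, 1 ≤ k →
        ∀ (b : Fin m ⊕ Fin m → Fin d → ℝ) (cc : Fin m ⊕ Fin m → ℝ),
          (∀ x : Fin d → ℝ,
            ∑ i, cc i * max (∑ l, b i l * x l) 0 =
              (1 / (k : ℝ)) * max (∑ l, v l * x l) 0) →
          sobSemi d (fun x =>
              (1 / (k : ℝ)) * max (∑ l, v l * x l) 0 -
                ∑ i : Fin m ⊕ Fin m,
                  Sum.elim (fun _ => (1 : ℝ)) (fun _ => -1) i *
                    max (∑ l, Sum.elim a (fun i' => -(a i')) i l * x l) 0) = 1 / k ∧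
          max (⨆ i, ⨆ l, |b i l - Sum.elim a (fun i' => -(a i')) i l|)
              (⨆ i, |cc i - Sum.elim (fun _ => (1 : ℝ)) (fun _ => -1) i|) ≥ C := by
  have hv0 : v ≠ 0 := by
    rintro rfl
    simp at hvnorm
  obtain ⟨l, -⟩ := Function.ne_iff.1 hv0
  have hd : (0 : ℝ) < d := Nat.cast_pos.2 l.pos
  set M := Finset.univ.inf' (Finset.univ_nonempty_iff.mpr ⟨⟨0, hm⟩⟩) fun i =>
    (∑ l, (a i l) ^ 2) * (∑ l, (v l) ^ 2) - (∑ l, a i l * v l) ^ 2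
  have hgram : ∀ i, M ≤ (a i ⬝ᵥ a i) * (v ⬝ᵥ v) - (a i ⬝ᵥ v) ^ 2 := fun i =>
    (Finset.inf'_le _ (Finset.mem_univ i)).trans_eq (by simp only [dotProduct, sq])
  have hMpos : 0 < M := (Finset.lt_inf'_iff _).2 fun i _ => by
    simpa only [dotProduct, sq] using gram_pos (fun h => by simpa [h] using hnorm i) (hv i)
  have hdist : ∀ j (μ : ℝ), √(1 / (d : ℝ) ^ 2 * M) ≤ ‖a j - μ • v‖ := fun j μ => by
    rw [Real.sqrt_le_left (norm_nonneg _), one_div_mul_eq_div, div_le_iff₀ (by positivity)]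
    have := gram_le_card_sq_mul (a j) v μ
    rw [Fintype.card_fin, hvnorm] at this
    linarith [hgram j]
  refine ⟨√(1 / (d : ℝ) ^ 2 * M), by positivity, Real.sq_sqrt (by positivity),
    fun k hk b cc hreal => ⟨?_, ?_⟩⟩
  · have h := sobSemi_mul_relu hv0 (α := 1 / k) (by positivity)
    rw [hvnorm, mul_one] at h
    convert h using 2
    funext x
    exact sub_eq_self.2 (realization_opposite_eq_zero hsum x)
  · obtain ⟨i, μ, hb⟩ := exists_eq_smul_of_realization_eq hv0 (by positivity) hreal
    obtain ⟨j, μ', hj⟩ := exists_norm_smul_sub_opposite_eq a v μ i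
    calc √(1 / (d : ℝ) ^ 2 * M) ≤ ‖(b - Sum.elim a (fun i' => -(a i'))) i‖ := by
          rw [Pi.sub_apply, hb, hj]
          exact hdist j μ'
      _ ≤ _ := (norm_le_iSup_iSup_abs _ i).trans (le_max_left _ _)

/-- Failure of inverse stability due to opposite weight vectors: `Γ` with rows
`a_1,…,a_m,−a_1,…,−a_m` and output weights `(1,…,1,−1,…,−1)` realizes `0`;
every parametrization of `g_k = (1/k)ReLU(⟨v,·⟩)` stays at distance `≥ C`
from `Γ`, with `C² = (1/d²)·min_i (‖a_i‖₂²‖v‖₂² − ⟨a_i,v⟩²)`. -/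
theorem stmt_8 (d m : ℕ) (hd : 0 < d) (hm : 0 < m)
    (a : Fin m → Fin d → ℝ) (v : Fin d → ℝ)
    (hnorm : ∀ i, ‖a i‖ = 1) (hvnorm : ‖v‖ = 1)
    (hpair : ∀ i j, i ≠ j → ∀ μ : ℝ, a i ≠ μ • a j)
    (hsum : ∑ i, a i = 0)
    (hv : ∀ i, ∀ μ : ℝ, v ≠ μ • a i) :
    ∃ C : ℝ, 0 < C ∧
      C ^ 2 = (1 / (d : ℝ) ^ 2) *
        (Finset.univ.inf' (Finset.univ_nonempty_iff.mpr ⟨⟨0, hm⟩⟩) fun i =>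
          (∑ l, (a i l) ^ 2) * (∑ l, (v l) ^ 2) - (∑ l, a i l * v l) ^ 2) ∧
      ∀ k : ℕ, 1 ≤ k →
        ∀ (b : Fin m ⊕ Fin m → Fin d → ℝ) (cc : Fin m ⊕ Fin m → ℝ),
          (∀ x : Fin d → ℝ,
            ∑ i, cc i * max (∑ l, b i l * x l) 0 =
              (1 / (k : ℝ)) * max (∑ l, v l * x l) 0) →
          sobSemi d (fun x =>
              (1 / (k : ℝ)) * max (∑ l, v l * x l) 0 -
                ∑ i : Fin m ⊕ Fin m,
                  Sum.elim (fun _ => (1 : ℝ)) (fun _ => -1) i *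
                    max (∑ l, Sum.elim a (fun i' => -(a i')) i l * x l) 0) = 1 / k ∧
          max (⨆ i, ⨆ l, |b i l - Sum.elim a (fun i' => -(a i')) i l|)
              (⨆ i, |cc i - Sum.elim (fun _ => (1 : ℝ)) (fun _ => -1) i|) ≥ C :=
  stmt_8_general d m hm a v hnorm hvnorm hsum hv
end

section
/- For every two-layer ReLU network Θ with biases, architecture (d, m, D) — i.e. Θ = ((A, b), (C, e)) with realization x ↦ C·ReLU(Ax + b) + e — there exists a bias-free two-layer ReLU network Γ with architecture (d+2, m+1, D) that is balanced (‖c_i^Γ‖_∞ = ‖a_i^Γ‖_∞ for all hidden neurons i) and whose last two input-coordinates of every first-layer weight vector are strictly positive, such that for all x ∈ ℝ^d: R(Γ)(x_1, …, x_d, 1, −1) = R(Θ)(x). -/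
noncomputable section
namespace Stmt10Aux

def aug (d : ℕ) (x : Fin d → ℝ) : Fin (d + 2) → ℝ :=
  fun l => if hl : (l : ℕ) < d then x ⟨l, hl⟩ else if (l : ℕ) = d then 1 else -1

lemma aug_castSucc2 {d : ℕ} (x : Fin d → ℝ) (l : Fin d) :
    aug d x (l.castSucc.castSucc) = x l := by
  simp [aug, l.isLt]

lemma aug_d {d : ℕ} (x : Fin d → ℝ) : aug d x ((Fin.last d).castSucc) = 1 := by
  simp [aug]

lemma aug_d1 {d : ℕ} (x : Fin d → ℝ) : aug d x (Fin.last (d + 1)) = -1 := by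
  show (if hl : (d + 1 : ℕ) < d then x ⟨d+1, hl⟩ else if (d + 1 : ℕ) = d then 1 else -1) = -1
  rw [dif_neg (by omega), if_neg (by omega)]

/-- A bias-free row: first `d` coordinates `w`, then `u`, then `v`. -/
def rrow {d : ℕ} (w : Fin d → ℝ) (u v : ℝ) : Fin (d + 2) → ℝ :=
  fun l => if hl : (l : ℕ) < d then w ⟨l, hl⟩ else if (l : ℕ) = d then u else v

lemma rrow_castSucc2 {d : ℕ} (w : Fin d → ℝ) (u v : ℝ) (l : Fin d) :
    rrow w u v (l.castSucc.castSucc) = w l := by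
  simp [rrow, l.isLt]

lemma rrow_d {d : ℕ} (w : Fin d → ℝ) (u v : ℝ) :
    rrow w u v ((Fin.last d).castSucc) = u := by
  simp [rrow]

lemma rrow_d1 {d : ℕ} (w : Fin d → ℝ) (u v : ℝ) :
    rrow w u v (Fin.last (d + 1)) = v := by
  show (if hl : (d + 1 : ℕ) < d then w ⟨d+1, hl⟩ else if (d + 1 : ℕ) = d then u else v) = v
  rw [dif_neg (by omega), if_neg (by omega)]

lemma rrow_mk_d {d : ℕ} (w : Fin d → ℝ) (u v : ℝ) (h : d < d + 2) :
    rrow w u v ⟨d, h⟩ = u := by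
  simp [rrow]

lemma rrow_mk_d1 {d : ℕ} (w : Fin d → ℝ) (u v : ℝ) (h : d + 1 < d + 2) :
    rrow w u v ⟨d + 1, h⟩ = v := rrow_d1 w u v

lemma dot_rrow_aug {d : ℕ} (w : Fin d → ℝ) (u v : ℝ) (x : Fin d → ℝ) :
    ∑ l : Fin (d + 2), rrow w u v l * aug d x l = (∑ l, w l * x l) + u - v := by
  rw [Fin.sum_univ_castSucc, Fin.sum_univ_castSucc]
  simp only [rrow_castSucc2, rrow_d, rrow_d1, aug_castSucc2, aug_d, aug_d1]
  ring

lemma abs_last_le_norm {d : ℕ} (w : Fin d → ℝ) (u v : ℝ) : |v| ≤ ‖rrow w u v‖ := by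
  calc |v| = ‖rrow w u v (Fin.last (d+1))‖ := by rw [rrow_d1, Real.norm_eq_abs]
    _ ≤ _ := norm_le_pi_norm _ _

lemma norm_rrow0uv {d : ℕ} {u v : ℝ} (h0 : 0 ≤ v) (h1 : v ≤ u) :
    ‖rrow (0 : Fin d → ℝ) u v‖ = u := by
  apply le_antisymm
  · apply pi_norm_le_iff_of_nonneg (le_trans h0 h1) |>.mpr
    intro l
    rw [Real.norm_eq_abs, rrow]
    split
    · simpa using le_trans h0 h1
    · split
      · rw [abs_of_nonneg (le_trans h0 h1)]
      · rw [abs_of_nonneg h0]; exact h1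
  · have h2 : u = ‖rrow (0 : Fin d → ℝ) u v ((Fin.last d).castSucc)‖ := by
      rw [rrow_d, Real.norm_eq_abs, abs_of_nonneg (le_trans h0 h1)]
    exact le_trans (le_of_eq h2) (norm_le_pi_norm _ _)

lemma norm_rrow012 {d : ℕ} : ‖rrow (0 : Fin d → ℝ) 1 2‖ = 2 := by
  have := @abs_last_le_norm d 0 1 2
  apply le_antisymm
  · apply pi_norm_le_iff_of_nonneg (by norm_num) |>.mpr
    intro l
    rw [Real.norm_eq_abs, rrow]
    split
    · simp
    · split <;> norm_num
  · simpa using this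

end Stmt10Aux

open Stmt10Aux

/-- Every biased two-layer ReLU network with architecture `(d,m,D)` can be
represented by a balanced bias-free network with architecture `(d+2, m+1, D)`
whose first-layer rows have strictly positive last two coordinates, after
augmenting the input by the constants `1` and `−1`. -/
theorem stmt_10 {d m D : ℕ} (hD : 0 < D)
    (A : Fin m → Fin d → ℝ) (b : Fin m → ℝ) (C : Fin m → Fin D → ℝ) (e : Fin D → ℝ) :
    ∃ (A' : Fin (m + 1) → Fin (d + 2) → ℝ) (C' : Fin (m + 1) → Fin D → ℝ),
      (∀ i, ‖C' i‖ = ‖A' i‖) ∧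
      (∀ i, 0 < A' i ⟨d, by omega⟩ ∧ 0 < A' i ⟨d + 1, by omega⟩) ∧
      (∀ x : Fin d → ℝ, ∀ j : Fin D,
        ∑ i, C' i j * max (∑ l : Fin (d + 2),
            A' i l * (if hl : (l : ℕ) < d then x ⟨l, hl⟩
              else if (l : ℕ) = d then 1 else -1)) 0
          = ∑ i, C i j * max ((∑ l, A i l * x l) + b i) 0 + e j) := by
  classical
  have hne : Nonempty (Fin D) := Fin.pos_iff_nonempty.mp hD
  set r : Fin m → Fin (d + 2) → ℝ :=
    fun i => rrow (A i) (b i + (|b i| + 1)) (|b i| + 1) with hr_def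
  have hr : ∀ i, 0 < ‖r i‖ := by
    intro i
    have h1 : (0:ℝ) < |b i| + 1 := by positivity
    have h2 : |b i| + 1 = |(|b i| + 1)| := (abs_of_nonneg (by positivity)).symm
    exact lt_of_lt_of_le (h2 ▸ h1) (abs_last_le_norm _ _ _)
  set lam : Fin m → ℝ := fun i => Real.sqrt (‖C i‖ / ‖r i‖) with hlam_def
  have hlam : ∀ i, C i ≠ 0 → 0 < lam i := fun i hC =>
    Real.sqrt_pos.mpr (div_pos (norm_pos_iff.mpr hC) (hr i))
  set s : ℝ := Real.sqrt (‖e‖ / 2) with hs_def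
  have hs : e ≠ 0 → 0 < s := fun he =>
    Real.sqrt_pos.mpr (div_pos (norm_pos_iff.mpr he) two_pos)
  refine ⟨fun i => if h : (i : ℕ) < m then
      (if C ⟨i, h⟩ = 0 then rrow (0 : Fin d → ℝ) 1 2 else lam ⟨i, h⟩ • r ⟨i, h⟩)
    else (if e = 0 then rrow (0 : Fin d → ℝ) 1 2 else rrow (0 : Fin d → ℝ) (2 * s) s),
    fun i j => if h : (i : ℕ) < m then
      (if C ⟨i, h⟩ = 0 then 2 else C ⟨i, h⟩ j / lam ⟨i, h⟩)
    else (if e = 0 then 2 else e j / s), ?_, ?_, ?_⟩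
  · -- balance
    intro i
    by_cases h : (i : ℕ) < m
    · simp only [dif_pos h]
      by_cases hC : C ⟨i, h⟩ = 0
      · simp only [if_pos hC]
        rw [norm_rrow012]
        rw [pi_norm_const (2:ℝ)]
        norm_num
      · simp only [if_neg hC]
        have hl := hlam ⟨i, h⟩ hC
        have h1 : (fun j => C ⟨i, h⟩ j / lam ⟨i, h⟩) = (lam ⟨i, h⟩)⁻¹ • C ⟨i, h⟩ := by
          funext j; simp [div_eq_inv_mul]
        rw [h1, norm_smul, norm_smul, Real.norm_eq_abs, Real.norm_eq_abs,
          abs_of_pos (inv_pos.mpr hl), abs_of_pos hl]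
        have hsq : lam ⟨i, h⟩ ^ 2 = ‖C ⟨i, h⟩‖ / ‖r ⟨i, h⟩‖ := by
          rw [hlam_def]; exact Real.sq_sqrt (by positivity)
        have hrne := (hr ⟨i, h⟩).ne'
        field_simp at hsq ⊢
        nlinarith [hsq, hr ⟨i, h⟩, hl]
    · simp only [dif_neg h]
      by_cases he : e = 0
      · simp only [if_pos he]
        rw [norm_rrow012]
        rw [pi_norm_const (2:ℝ)]
        norm_num
      · simp only [if_neg he]
        have hsp := hs he
        have h1 : (fun j => e j / s) = s⁻¹ • e := by funext j; simp [div_eq_inv_mul]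
        rw [h1, norm_smul, Real.norm_eq_abs, abs_of_pos (inv_pos.mpr hsp),
          norm_rrow0uv hsp.le (by linarith)]
        have hsq : s ^ 2 = ‖e‖ / 2 := by rw [hs_def]; exact Real.sq_sqrt (by positivity)
        field_simp
        nlinarith [hsq, hsp]
  · -- positivity of last two coordinates
    intro i
    by_cases h : (i : ℕ) < m
    · simp only [dif_pos h]
      by_cases hC : C ⟨i, h⟩ = 0
      · simp only [if_pos hC]
        rw [rrow_mk_d _ _ _ (by omega), rrow_mk_d1 _ _ _ (by omega)]
        norm_num
      · simp only [if_neg hC, Pi.smul_apply, smul_eq_mul, hr_def]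
        rw [rrow_mk_d _ _ _ (by omega), rrow_mk_d1 _ _ _ (by omega)]
        have hl := hlam ⟨i, h⟩ hC
        have hb : 0 < b ⟨i, h⟩ + (|b ⟨i, h⟩| + 1) := by
          have := neg_abs_le (b ⟨i, h⟩); linarith
        exact ⟨mul_pos hl hb, mul_pos hl (by positivity)⟩
    · simp only [dif_neg h]
      by_cases he : e = 0
      · simp only [if_pos he]
        rw [rrow_mk_d _ _ _ (by omega), rrow_mk_d1 _ _ _ (by omega)]
        norm_num
      · simp only [if_neg he]
        rw [rrow_mk_d _ _ _ (by omega), rrow_mk_d1 _ _ _ (by omega)]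
        have hsp := hs he
        exact ⟨by linarith, hsp⟩
  · -- realization
    intro x j
    show ∑ i : Fin (m + 1), _ * max (∑ l : Fin (d + 2), _ * aug d x l) 0 = _
    rw [Fin.sum_univ_castSucc]
    have hlast : ¬ ((Fin.last m : Fin (m + 1)) : ℕ) < m := by simp
    congr 1
    · apply Finset.sum_congr rfl
      intro i _
      have hi : ((i.castSucc : Fin (m + 1)) : ℕ) < m := by simp
      have hmk : (⟨((i.castSucc : Fin (m + 1)) : ℕ), hi⟩ : Fin m) = i := by
        ext; simp
      simp only [dif_pos hi, hmk]
      by_cases hC : C i = 0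
      · simp only [if_pos hC]
        rw [dot_rrow_aug]
        simp [hC]
      · simp only [if_neg hC]
        have hl := hlam i hC
        have hsum : ∑ l : Fin (d + 2), (lam i • r i) l * aug d x l
            = lam i * ((∑ l, A i l * x l) + b i) := by
          simp only [Pi.smul_apply, smul_eq_mul, mul_assoc, ← Finset.mul_sum]
          rw [hr_def, dot_rrow_aug]
          ring
        rw [hsum]
        have hmax : max (lam i * ((∑ l, A i l * x l) + b i)) 0
            = lam i * max ((∑ l, A i l * x l) + b i) 0 := by
          rcases le_total ((∑ l, A i l * x l) + b i) 0 with hS | hS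
          · rw [max_eq_right hS, mul_zero, max_eq_right]
            exact mul_nonpos_of_nonneg_of_nonpos hl.le hS
          · rw [max_eq_left hS, max_eq_left (mul_nonneg hl.le hS)]
        rw [hmax]
        field_simp
    · simp only [dif_neg hlast]
      by_cases he : e = 0
      · simp only [if_pos he]
        rw [dot_rrow_aug]
        simp [he]
      · simp only [if_neg he]
        rw [dot_rrow_aug]
        have hsp := hs he
        have : (∑ l : Fin d, (0 : Fin d → ℝ) l * x l) + 2 * s - s = s := by simp; ring
        rw [this, max_eq_left hsp.le]
        field_simp
end
end

section
/- Inverse stability for balanced shallow ReLU networks: Let N = (d, m, D) and let N*_N be the set of bias-free two-layer parametrizations Γ = ((a_i^Γ)_i, (c_i^Γ)_i) such that (i) ‖c_i^Γ‖_∞ = ‖a_i^Γ‖_∞ for all i (balancedness), (ii) no two nonzero first-layer rows are positive multiples of each other (no redundant directions), and (iii) the last two coordinates of each a_i^Γ are strictly positive. Then for every Γ ∈ N*_N and every g ∈ R(N*_N) there exists Φ ∈ N*_N with R(Φ) = g and ‖Φ − Γ‖_∞ ≤ 4·|g − R(Γ)|_{W^{1,∞}}^{1/2}. -/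
/-!
Off the hyperplanes `a i ⬝ᵥ x = 0`, the Jacobian of a shallow ReLU network is the sum of the
outer products `c i (a i)ᵀ` over its active neurons. Crossing a hyperplane `v ⬝ᵥ x = 0` at a
generic point changes the Jacobian of `R(Θ) - R(Γ)` by the difference of the summed outer
products of the neurons of `Θ` and of `Γ` whose rows lie on the ray of `v`; hence that
difference is entrywise at most `2 |R(Θ) - R(Γ)|_{W^{1,∞}}`. Since no two rows are opposite and
no two rows of one network share a ray, every ray carries at most one neuron of each network:
matching the neurons of `Γ` and `Θ` on common rays, and the rest arbitrarily, permutes `Θ`.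
For balanced neurons, outer products that are `δ`-close with rows on a common ray force rows and
output weights to be `2 √δ`-close, and an outer product bounded by `δ` forces `‖a‖ = ‖c‖ ≤ √δ`.
With `δ = 2 |R(Θ) - R(Γ)|_{W^{1,∞}}` this gives the constant `2 √2 ≤ 4`.
-/

open MeasureTheory

/-- The `W^{1,∞}` seminorm of a vector-valued function: essential supremum of
the max-norm of the (a.e.) Jacobian. -/
noncomputable def vSobSemi (d D : ℕ) (f : (Fin d → ℝ) → Fin D → ℝ) : ℝ :=
  essSup (fun x : Fin d → ℝ =>
    ⨆ j : Fin D, ⨆ l : Fin d, |fderiv ℝ (fun y => f y j) x (Pi.single l 1)|) volume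

open Filter Topology Matrix

namespace ShallowReLU

lemma not_sameRay_neg_of_apply_pos {n : Type*} {b v : n → ℝ} {k : n} (hb : 0 < b k)
    (hv : 0 < v k) : ¬SameRay ℝ b (-v) := by
  intro h
  obtain ⟨r, hr, hrb⟩ := h.exists_pos_left (ne_of_apply_ne (· k) hb.ne')
    (neg_ne_zero.2 (ne_of_apply_ne (· k) hv.ne'))
  have hk := congrFun hrb k
  simp only [Pi.smul_apply, Pi.neg_apply, smul_eq_mul] at hk
  nlinarith [mul_pos hr hb]

lemma ne_smul_of_not_sameRay {n : Type*} {b v : n → ℝ} (h : ¬SameRay ℝ b v)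
    (h' : ¬SameRay ℝ b (-v)) (μ : ℝ) : b ≠ μ • v := by
  rintro rfl
  rcases le_total 0 μ with hμ | hμ
  · exact h (SameRay.sameRay_nonneg_smul_left v hμ)
  · refine h' ?_
    simpa using SameRay.sameRay_nonneg_smul_left (R := ℝ) (-v) (neg_nonneg.2 hμ)

lemma eq_of_sameRay {ι E : Type*} [AddCommGroup E] [Module ℝ E] {a : ι → E} (ha : ∀ i, a i ≠ 0)
    (hred : ∀ i j, i ≠ j → a i ≠ 0 → a j ≠ 0 → ∀ μ : ℝ, 0 < μ → a i ≠ μ • a j) {i j : ι}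
    (h : SameRay ℝ (a i) (a j)) : i = j := by
  by_contra hij
  obtain ⟨r, hr, hrij⟩ := h.exists_pos_left (ha i) (ha j)
  exact hred j i (Ne.symm hij) (ha j) (ha i) r hr hrij.symm

open scoped Classical in
lemma sum_sameRay_eq_of_sameRay {ι E M : Type*} [Fintype ι] [AddCommGroup E] [Module ℝ E]
    [AddCommMonoid M] {a : ι → E} (hinj : ∀ i k, SameRay ℝ (a i) (a k) → i = k) {v : E}
    (hv : v ≠ 0) {i : ι} (hi : SameRay ℝ (a i) v) (f : ι → M) :
    ∑ k with SameRay ℝ (a k) v, f k = f i :=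
  Finset.sum_eq_single_of_mem i (Finset.mem_filter.2 ⟨Finset.mem_univ _, hi⟩) fun k hk hki =>
    (hki (hinj k i ((Finset.mem_filter.1 hk).2.trans hi.symm fun h => (hv h).elim))).elim

open scoped Classical in
lemma sum_sameRay_eq_zero {ι E M : Type*} [Fintype ι] [AddCommGroup E] [Module ℝ E]
    [AddCommMonoid M] {a : ι → E} {v : E} (h : ∀ k, ¬SameRay ℝ (a k) v) (f : ι → M) :
    ∑ k with SameRay ℝ (a k) v, f k = 0 :=
  Finset.sum_eq_zero fun k hk => ((h k) (Finset.mem_filter.1 hk).2).elim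

lemma exists_perm_of_injective_rel {ι : Type*} [Finite ι] (R : ι → ι → Prop)
    (hl : ∀ i k k', R i k → R i k' → k = k') (hr : ∀ i i' k, R i k → R i' k → i = i') :
    ∃ σ : Equiv.Perm ι, ∀ i k, R i k → σ i = k := by
  classical
  let f : {i // ∃ k, R i k} → {k // ∃ i, R i k} := fun i => ⟨i.2.choose, i.1, i.2.choose_spec⟩
  have hf : f.Bijective := by
    refine ⟨fun i i' h => Subtype.ext (hr _ _ _ i.2.choose_spec ?_), fun k => ?_⟩
    · have hk : i.2.choose = i'.2.choose := congrArg Subtype.val h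
      exact hk ▸ i'.2.choose_spec
    · obtain ⟨i, hi⟩ := k.2
      exact ⟨⟨i, k, hi⟩, Subtype.ext (hl _ _ _ (Exists.choose_spec ⟨k.1, hi⟩) hi)⟩
  refine ⟨(Equiv.ofBijective f hf).extendSubtype, fun i k hik => ?_⟩
  rw [Equiv.extendSubtype_apply_of_mem _ _ ⟨k, hik⟩]
  exact hl _ _ _ (Exists.choose_spec ⟨k, hik⟩) hik

lemma sub_le_sqrt_of_sq_le_sq_add {p q δ : ℝ} (hq : 0 ≤ q) (hqp : q ≤ p)
    (h : p ^ 2 ≤ q ^ 2 + δ) : p - q ≤ √δ :=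
  Real.le_sqrt_of_sq_le (by nlinarith)

lemma abs_sub_le_two_mul_sqrt {p q x y δ : ℝ} (hq : 0 ≤ q) (hqp : q ≤ p)
    (h : p ^ 2 ≤ q ^ 2 + δ) (hx : |x| ≤ p) (hy : |y| ≤ q) (hxy : |p * x - q * y| ≤ δ) :
    |x - y| ≤ 2 * √δ := by
  have hsδ := Real.sqrt_nonneg δ
  rcases le_or_gt p √δ with hpδ | hpδ
  · linarith [abs_sub x y]
  have hp : 0 < p := hsδ.trans_lt hpδ
  have hpq := sub_le_sqrt_of_sq_le_sq_add hq hqp h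
  have hδ : √δ * √δ = δ := Real.mul_self_sqrt ((abs_nonneg _).trans hxy)
  have hmul : p * |x - y| ≤ δ + (p - q) * q :=
    calc p * |x - y| = |p * (x - y)| := by rw [abs_mul, abs_of_pos hp]
      _ = |(p * x - q * y) - (p - q) * y| := by congr 1; ring
      _ ≤ |p * x - q * y| + |(p - q) * y| := abs_sub _ _
      _ = |p * x - q * y| + (p - q) * |y| := by rw [abs_mul, abs_of_nonneg (sub_nonneg.2 hqp)]
      _ ≤ δ + (p - q) * q := add_le_add hxy (mul_le_mul_of_nonneg_left hy (sub_nonneg.2 hqp))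
  refine le_of_mul_le_mul_left ?_ hp
  nlinarith [mul_le_mul hpq hqp hq hsδ, mul_le_mul_of_nonneg_left hpδ.le hsδ]

lemma two_mul_sqrt_two_mul_le (x : ℝ) : 2 * √(2 * x) ≤ 4 * √x := by
  have h2 : √2 ≤ 2 := Real.sqrt_le_iff.2 ⟨zero_le_two, by norm_num⟩
  rw [Real.sqrt_mul zero_le_two]
  nlinarith [Real.sqrt_nonneg x]

section Balanced

variable {m n : Type*} [Fintype n]

lemma abs_apply_le_norm (f : n → ℝ) (i : n) : |f i| ≤ ‖f‖ :=
  Real.norm_eq_abs (f i) ▸ norm_le_pi_norm f i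

lemma exists_abs_eq_norm {f : n → ℝ} (hf : f ≠ 0) : ∃ i, |f i| = ‖f‖ := by
  obtain ⟨i₀, -⟩ := Function.ne_iff.1 hf
  have : Nonempty n := ⟨i₀⟩
  obtain ⟨i, hi⟩ := Finite.exists_max fun i => |f i|
  refine ⟨i, le_antisymm (abs_apply_le_norm f i) ?_⟩
  exact (pi_norm_le_iff_of_nonneg (abs_nonneg _)).2 fun k => (Real.norm_eq_abs _).trans_le (hi k)

lemma norm_le_sqrt_of_forall_abs_mul_le [Fintype m] {c : m → ℝ} {a : n → ℝ} (hbal : ‖c‖ = ‖a‖)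
    {δ : ℝ} (h : ∀ j l, |c j * a l| ≤ δ) : ‖a‖ ≤ √δ := by
  rcases eq_or_ne a 0 with rfl | ha
  · simp
  obtain ⟨j, hj⟩ := exists_abs_eq_norm (by rwa [← norm_ne_zero_iff, hbal, norm_ne_zero_iff] : c ≠ 0)
  obtain ⟨l, hl⟩ := exists_abs_eq_norm ha
  refine Real.le_sqrt_of_sq_le ?_
  calc ‖a‖ ^ 2 = |c j * a l| := by rw [abs_mul, hj, hl, hbal, sq]
    _ ≤ δ := h j l

lemma norm_sub_le_of_forall_abs_mul_le [Fintype m] {c c' : m → ℝ} {a a' : n → ℝ}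
    (hbal : ‖c‖ = ‖a‖) (hbal' : ‖c'‖ = ‖a'‖) {δ : ℝ} (h : ∀ j l, |c j * a l| ≤ δ)
    (h' : ∀ j l, |c' j * a' l| ≤ δ) :
    ‖a - a'‖ ≤ 2 * √δ ∧ ‖c - c'‖ ≤ 2 * √δ := by
  have ha := norm_le_sqrt_of_forall_abs_mul_le hbal h
  have ha' := norm_le_sqrt_of_forall_abs_mul_le hbal' h'
  constructor
  · linarith [norm_sub_le a a']
  · linarith [norm_sub_le c c']

lemma sq_norm_le_sq_norm_add [Fintype m] {c c' : m → ℝ} {a a' : n → ℝ} (hbal : ‖c‖ = ‖a‖)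
    (hbal' : ‖c'‖ = ‖a'‖) (ha : a ≠ 0) {δ : ℝ} (h : ∀ j l, |c j * a l - c' j * a' l| ≤ δ) :
    ‖a‖ ^ 2 ≤ ‖a'‖ ^ 2 + δ := by
  obtain ⟨j, hj⟩ := exists_abs_eq_norm (by rwa [← norm_ne_zero_iff, hbal, norm_ne_zero_iff] : c ≠ 0)
  obtain ⟨l, hl⟩ := exists_abs_eq_norm ha
  have h' : |c' j * a' l| ≤ ‖a'‖ ^ 2 := by
    rw [abs_mul, sq]
    exact mul_le_mul (hbal' ▸ abs_apply_le_norm c' j) (abs_apply_le_norm a' l) (abs_nonneg _)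
      (norm_nonneg _)
  have := abs_sub_abs_le_abs_sub (c j * a l) (c' j * a' l)
  rw [abs_mul, hj, hl, hbal] at this
  nlinarith [h j l]

lemma abs_norm_mul_sub_norm_mul_le {c c' : m → ℝ} {a a' : n → ℝ} (hray : SameRay ℝ a a')
    (ha : a ≠ 0) {δ : ℝ} (h : ∀ j l, |c j * a l - c' j * a' l| ≤ δ) (j : m) :
    |‖a‖ * c j - ‖a'‖ * c' j| ≤ δ := by
  obtain ⟨l, hl⟩ := exists_abs_eq_norm ha
  have hp : 0 < ‖a‖ := norm_pos_iff.2 ha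
  have hpa' : ‖a‖ * a' l = ‖a'‖ * a l := congrFun hray.norm_smul_eq l
  refine le_of_mul_le_mul_left ?_ hp
  calc ‖a‖ * |‖a‖ * c j - ‖a'‖ * c' j| = |(‖a‖ * c j - ‖a'‖ * c' j) * a l| := by
        rw [abs_mul, hl, mul_comm]
    _ = |‖a‖ * (c j * a l - c' j * a' l)| := by
        congr 1
        linear_combination c' j * hpa'
    _ = ‖a‖ * |c j * a l - c' j * a' l| := by rw [abs_mul, abs_norm]
    _ ≤ ‖a‖ * δ := mul_le_mul_of_nonneg_left (h j l) hp.le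

lemma norm_sub_le_of_sameRay [Fintype m] {c c' : m → ℝ} {a a' : n → ℝ} (hbal : ‖c‖ = ‖a‖)
    (hbal' : ‖c'‖ = ‖a'‖) (hray : SameRay ℝ a a') {δ : ℝ}
    (h : ∀ j l, |c j * a l - c' j * a' l| ≤ δ) :
    ‖a - a'‖ ≤ 2 * √δ ∧ ‖c - c'‖ ≤ 2 * √δ := by
  wlog hle : ‖a'‖ ≤ ‖a‖ generalizing a a' c c'
  · have := this hbal' hbal hray.symm (fun j l => abs_sub_comm (c j * a l) _ ▸ h j l)
      (le_of_not_ge hle)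
    rwa [norm_sub_rev a, norm_sub_rev c]
  rcases eq_or_ne a 0 with rfl | ha
  · have ha' : a' = 0 := norm_le_zero_iff.1 (by simpa using hle)
    subst ha'
    simp [norm_eq_zero.1 (hbal.trans norm_zero), norm_eq_zero.1 (hbal'.trans norm_zero)]
  have hsq := sq_norm_le_sq_norm_add hbal hbal' ha h
  refine ⟨?_, (pi_norm_le_iff_of_nonneg (by positivity)).2 fun j => ?_⟩
  · rw [hray.norm_sub, abs_of_nonneg (sub_nonneg.2 hle)]
    linarith [sub_le_sqrt_of_sq_le_sq_add (norm_nonneg a') hle hsq, Real.sqrt_nonneg δ]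
  · rw [Real.norm_eq_abs, Pi.sub_apply]
    exact abs_sub_le_two_mul_sqrt (norm_nonneg a') hle hsq (hbal ▸ abs_apply_le_norm c j)
      (hbal' ▸ abs_apply_le_norm c' j) (abs_norm_mul_sub_norm_mul_le hray ha h j)

end Balanced

lemma ae_dotProduct_ne_zero {n : Type*} [Fintype n] (μ : Measure (n → ℝ)) [μ.IsAddHaarMeasure]
    {a : n → ℝ} (ha : a ≠ 0) : ∀ᵐ x ∂μ, a ⬝ᵥ x ≠ 0 := by
  have hker : LinearMap.ker (dotProductBilin ℝ ℝ a) ≠ ⊤ := fun h =>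
    ha <| dotProduct_self_eq_zero.1 <| LinearMap.mem_ker.1 (h ▸ Submodule.mem_top)
  rw [ae_iff]
  refine measure_mono_null (fun x hx => ?_) (Measure.addHaar_submodule μ _ hker)
  simpa using hx

lemma exists_dotProduct_eq_zero_and_forall_ne_zero {n κ : Type*} [Fintype n] [Finite κ]
    {v : n → ℝ} (hv : v ≠ 0) {b : κ → n → ℝ} (hb : ∀ k (μ : ℝ), b k ≠ μ • v) :
    ∃ x, v ⬝ᵥ x = 0 ∧ ∀ k, b k ⬝ᵥ x ≠ 0 := by
  have hvv : v ⬝ᵥ v ≠ 0 := mt dotProduct_self_eq_zero.1 hv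
  -- orthogonal projection onto the hyperplane `v ⬝ᵥ x = 0`; it is self-adjoint
  let P : (n → ℝ) → n → ℝ := fun y => y - ((v ⬝ᵥ y) / (v ⬝ᵥ v)) • v
  have hP : ∀ w y, w ⬝ᵥ P y = P w ⬝ᵥ y := by
    intro w y
    simp only [P, dotProduct_sub, sub_dotProduct, dotProduct_smul, smul_dotProduct, smul_eq_mul,
      dotProduct_comm v y, dotProduct_comm w v]
    ring
  obtain ⟨y, hy⟩ := (ae_all_iff.2 fun k =>
    ae_dotProduct_ne_zero volume (sub_ne_zero.2 (hb k ((v ⬝ᵥ b k) / (v ⬝ᵥ v))))).exists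
  refine ⟨P y, ?_, fun k => (hP _ _).trans_ne (hy k)⟩
  simp only [P, dotProduct_sub, dotProduct_smul, smul_eq_mul, div_mul_cancel₀ _ hvv, sub_self]

lemma exists_pos_forall_dotProduct_add_smul {n : Type*} [Fintype n] {b v x : n → ℝ}
    (h : SameRay ℝ b v) (hb : b ≠ 0) (hv : v ≠ 0) (hvx : v ⬝ᵥ x = 0) :
    ∃ r > 0, ∀ s : ℝ, b ⬝ᵥ (x + s • v) = r * s := by
  obtain ⟨r, hr, rfl⟩ := h.exists_pos_right hb hv
  refine ⟨r * (v ⬝ᵥ v), mul_pos hr (by simpa using dotProduct_self_star_pos_iff.2 hv), fun s => ?_⟩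
  simp only [smul_dotProduct, dotProduct_add, dotProduct_smul, hvx, smul_eq_mul]
  ring

variable {ι : Type*} {d D : ℕ}

def SameCell (a : ι → Fin d → ℝ) (x y : Fin d → ℝ) : Prop :=
  ∀ i, 0 < (a i ⬝ᵥ x) * (a i ⬝ᵥ y)

lemma sameCell_self {a : ι → Fin d → ℝ} {x : Fin d → ℝ} (hx : ∀ i, a i ⬝ᵥ x ≠ 0) :
    SameCell a x x :=
  fun i => mul_self_pos.2 (hx i)

namespace SameCell

variable {a : ι → Fin d → ℝ} {x y : Fin d → ℝ}

lemma pos_iff (h : SameCell a x y) (i : ι) : 0 < a i ⬝ᵥ x ↔ 0 < a i ⬝ᵥ y :=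
  pos_iff_pos_of_mul_pos (h i)

lemma ne_zero (h : SameCell a x y) (i : ι) : a i ⬝ᵥ y ≠ 0 :=
  right_ne_zero_of_mul (h i).ne'

end SameCell

lemma eventually_sameCell [Finite ι] {a : ι → Fin d → ℝ} {x : Fin d → ℝ}
    (hx : ∀ i, a i ⬝ᵥ x ≠ 0) : ∀ᶠ y in 𝓝 x, SameCell a x y :=
  eventually_all.2 fun i =>
    (continuous_const.mul (continuous_const.dotProduct continuous_id)).continuousAt.eventually
      (lt_mem_nhds (sameCell_self hx i))

lemma exists_pos_sameCell_add_smul {κ : Type*} [Finite κ] {b : κ → Fin d → ℝ} {x : Fin d → ℝ}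
    (hx : ∀ k, b k ⬝ᵥ x ≠ 0) (v : Fin d → ℝ) :
    ∃ t : ℝ, 0 < t ∧ SameCell b x (x + t • v) ∧ SameCell b x (x + (-t) • v) := by
  have hcell : ∀ᶠ s in 𝓝 (0 : ℝ), SameCell b x (x + s • v) :=
    ((by fun_prop : Continuous fun s : ℝ => x + s • v).tendsto' 0 x (by simp)).eventually
      (eventually_sameCell hx)
  have hcell' := (continuous_neg.tendsto' (0 : ℝ) 0 neg_zero).eventually hcell
  obtain ⟨t, h, ht⟩ := (((hcell.and hcell').filter_mono nhdsWithin_le_nhds).and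
    (self_mem_nhdsWithin (s := Set.Ioi 0))).exists
  exact ⟨t, ht, h⟩

variable [Fintype ι]

noncomputable def realization (a : ι → Fin d → ℝ) (c : ι → Fin D → ℝ) (x : Fin d → ℝ)
    (j : Fin D) : ℝ :=
  ∑ i, c i j * max (a i ⬝ᵥ x) 0

/-- Row `j` of the Jacobian of `realization a c` on the open linear region containing `x`. -/
noncomputable def cellJacobian (a : ι → Fin d → ℝ) (c : ι → Fin D → ℝ) (x : Fin d → ℝ)
    (j : Fin D) : Fin d → ℝ :=
  ∑ i with 0 < a i ⬝ᵥ x, c i j • a i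

lemma cellJacobian_apply (a : ι → Fin d → ℝ) (c : ι → Fin D → ℝ) (x : Fin d → ℝ) (j : Fin D)
    (l : Fin d) : cellJacobian a c x j l = ∑ i with 0 < a i ⬝ᵥ x, c i j * a i l := by
  simp [cellJacobian, Finset.sum_apply]

namespace SameCell

variable {a : ι → Fin d → ℝ} {x y : Fin d → ℝ}

lemma cellJacobian_eq (h : SameCell a x y) (c : ι → Fin D → ℝ) :
    cellJacobian a c y = cellJacobian a c x := by
  unfold cellJacobian
  rw [Finset.filter_congr fun i _ => (h.pos_iff i).symm]

lemma realization_eq (h : SameCell a x y) (c : ι → Fin D → ℝ) (j : Fin D) :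
    realization a c y j = cellJacobian a c x j ⬝ᵥ y := by
  rw [realization, cellJacobian, sum_dotProduct, Finset.sum_filter]
  refine Finset.sum_congr rfl fun i _ => ?_
  split_ifs with hi
  · rw [max_eq_left ((h.pos_iff i).1 hi).le, smul_dotProduct, smul_eq_mul]
  · rw [max_eq_right (not_lt.1 fun h' => hi ((h.pos_iff i).2 h')), mul_zero]

end SameCell

lemma hasFDerivAt_realization {a : ι → Fin d → ℝ} {x : Fin d → ℝ} (hx : ∀ i, a i ⬝ᵥ x ≠ 0)
    (c : ι → Fin D → ℝ) (j : Fin D) :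
    HasFDerivAt (fun y => realization a c y j)
      (LinearMap.toContinuousLinearMap (dotProductBilin ℝ ℝ (cellJacobian a c x j))) x :=
  (ContinuousLinearMap.hasFDerivAt _).congr_of_eventuallyEq <|
    (eventually_sameCell hx).mono fun _ hy => hy.realization_eq c j

lemma fderiv_realization_single {a : ι → Fin d → ℝ} {x : Fin d → ℝ} (hx : ∀ i, a i ⬝ᵥ x ≠ 0)
    (c : ι → Fin D → ℝ) (j : Fin D) (l : Fin d) :
    fderiv ℝ (fun y => realization a c y j) x (Pi.single l 1) = cellJacobian a c x j l := by
  simp [(hasFDerivAt_realization hx c j).fderiv, dotProduct_single]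

lemma abs_cellJacobian_le (a : ι → Fin d → ℝ) (c : ι → Fin D → ℝ) (x : Fin d → ℝ) (j : Fin D)
    (l : Fin d) : |cellJacobian a c x j l| ≤ ∑ i, ‖c i‖ * ‖a i‖ := by
  rw [cellJacobian_apply]
  refine (Finset.abs_sum_le_sum_abs _ _).trans <| (Finset.sum_le_sum_of_subset_of_nonneg
    (Finset.filter_subset _ _) fun _ _ _ => abs_nonneg _).trans (Finset.sum_le_sum fun i _ => ?_)
  rw [abs_mul]
  exact mul_le_mul (abs_apply_le_norm (c i) j) (abs_apply_le_norm (a i) l) (abs_nonneg _)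
    (norm_nonneg _)

lemma abs_cellJacobian_le_vSobSemi {a : ι → Fin d → ℝ} (ha : ∀ i, a i ≠ 0) {x : Fin d → ℝ}
    (hx : ∀ i, a i ⬝ᵥ x ≠ 0) (c : ι → Fin D → ℝ) (j : Fin D) (l : Fin d) :
    |cellJacobian a c x j l| ≤ vSobSemi d D (realization a c) := by
  set F : (Fin d → ℝ) → ℝ :=
    fun y => ⨆ j, ⨆ l, |fderiv ℝ (fun z => realization a c z j) y (Pi.single l 1)|
  have hgen : ∀ᵐ y, ∀ i, a i ⬝ᵥ y ≠ 0 := ae_all_iff.2 fun i => ae_dotProduct_ne_zero _ (ha i)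
  have hbdd : IsBoundedUnder (· ≤ ·) (ae volume) F := by
    refine ⟨∑ i, ‖c i‖ * ‖a i‖, eventually_map.2 (hgen.mono fun y hy => ?_)⟩
    refine Real.iSup_le (fun j => Real.iSup_le (fun l => ?_) (by positivity)) (by positivity)
    rw [fderiv_realization_single hy]
    exact abs_cellJacobian_le a c y j l
  obtain ⟨y, ⟨hyF, hy⟩, hxy⟩ :=
    (Measure.dense_of_ae ((ae_le_essSup hbdd).and hgen)).inter_nhds_nonempty
      (eventually_sameCell hx)
  calc |cellJacobian a c x j l| = |fderiv ℝ (fun z => realization a c z j) y (Pi.single l 1)| := by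
        rw [fderiv_realization_single hy, hxy.cellJacobian_eq]
    _ ≤ F y := le_ciSup_of_le (Finite.bddAbove_range _) j <|
        le_ciSup (f := fun l => |fderiv ℝ (fun z => realization a c z j) y (Pi.single l 1)|)
          (Finite.bddAbove_range _) l
    _ ≤ vSobSemi d D (realization a c) := hyF

open scoped Classical in
lemma abs_sum_sameRay_le_two_mul_vSobSemi {a : ι → Fin d → ℝ} (c : ι → Fin D → ℝ)
    {v : Fin d → ℝ} (hv : v ≠ 0) (hopp : ∀ i, ¬SameRay ℝ (a i) (-v)) (j : Fin D) (l : Fin d) :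
    |∑ i with SameRay ℝ (a i) v, c i j * a i l| ≤ 2 * vSobSemi d D (realization a c) := by
  have ha : ∀ i, a i ≠ 0 := fun i h => hopp i (h ▸ SameRay.zero_left _)
  obtain ⟨x₀, hvx₀, hx₀⟩ := exists_dotProduct_eq_zero_and_forall_ne_zero hv
    (b := fun i : {i // ¬SameRay ℝ (a i) v} => a i) fun i => ne_smul_of_not_sameRay i.2 (hopp i)
  -- crossing the hyperplane `v ⬝ᵥ x = 0` at `x₀` flips exactly the neurons on the ray of `v`
  obtain ⟨t, ht, htp, htm⟩ := exists_pos_sameCell_add_smul hx₀ v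
  have hray : ∀ i, SameRay ℝ (a i) v → ∃ r > 0, ∀ s : ℝ, a i ⬝ᵥ (x₀ + s • v) = r * s :=
    fun i hi => exists_pos_forall_dotProduct_add_smul hi (ha i) hv hvx₀
  have hgen : ∀ s : ℝ, s ≠ 0 →
      SameCell (fun i : {i // ¬SameRay ℝ (a i) v} => a i) x₀ (x₀ + s • v) →
      ∀ i, a i ⬝ᵥ (x₀ + s • v) ≠ 0 := by
    intro s hs hs' i
    by_cases hi : SameRay ℝ (a i) v
    · obtain ⟨r, hr, hrs⟩ := hray i hi
      exact (hrs s).trans_ne (mul_ne_zero hr.ne' hs)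
    · exact hs'.ne_zero ⟨i, hi⟩
  have hjump : cellJacobian a c (x₀ + t • v) j l - cellJacobian a c (x₀ + (-t) • v) j l =
      ∑ i with SameRay ℝ (a i) v, c i j * a i l := by
    simp only [cellJacobian_apply, Finset.sum_filter, ← Finset.sum_sub_distrib]
    refine Finset.sum_congr rfl fun i _ => ?_
    by_cases hi : SameRay ℝ (a i) v
    · obtain ⟨r, hr, hrs⟩ := hray i hi
      rw [if_pos hi, hrs, hrs, if_pos (mul_pos hr ht), if_neg (by nlinarith), sub_zero]
    · rw [if_neg hi, if_congr ((htp.pos_iff ⟨i, hi⟩).symm.trans (htm.pos_iff ⟨i, hi⟩)) rfl rfl,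
        sub_self]
  calc |∑ i with SameRay ℝ (a i) v, c i j * a i l|
      ≤ |cellJacobian a c (x₀ + t • v) j l| + |cellJacobian a c (x₀ + (-t) • v) j l| :=
        hjump ▸ abs_sub _ _
    _ ≤ 2 * vSobSemi d D (realization a c) := by
        rw [two_mul]
        exact add_le_add (abs_cellJacobian_le_vSobSemi ha (hgen t ht.ne' htp) c j l)
          (abs_cellJacobian_le_vSobSemi ha (hgen (-t) (neg_ne_zero.2 ht.ne') htm) c j l)

lemma realization_sumElim_neg {ι' : Type*} [Fintype ι'] (a : ι → Fin d → ℝ) (c : ι → Fin D → ℝ)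
    (a' : ι' → Fin d → ℝ) (c' : ι' → Fin D → ℝ) :
    realization (Sum.elim a a') (Sum.elim c (-c')) =
      fun x j => realization a c x j - realization a' c' x j := by
  ext x j
  simp [realization, Fintype.sum_sum_type, sub_eq_add_neg]

open scoped Classical in
lemma abs_sub_sum_sameRay_le_two_mul_vSobSemi {ι' : Type*} [Fintype ι'] {a : ι → Fin d → ℝ}
    (c : ι → Fin D → ℝ) {a' : ι' → Fin d → ℝ} (c' : ι' → Fin D → ℝ) {v : Fin d → ℝ}
    (hv : v ≠ 0) (hopp : ∀ i, ¬SameRay ℝ (a i) (-v)) (hopp' : ∀ i, ¬SameRay ℝ (a' i) (-v))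
    (j : Fin D) (l : Fin d) :
    |∑ i with SameRay ℝ (a i) v, c i j * a i l - ∑ i with SameRay ℝ (a' i) v, c' i j * a' i l| ≤
      2 * vSobSemi d D (fun x j => realization a c x j - realization a' c' x j) := by
  have h := abs_sum_sameRay_le_two_mul_vSobSemi (Sum.elim c (-c')) hv
    (a := Sum.elim a a') (Sum.forall.2 ⟨hopp, hopp'⟩) j l
  simp only [realization_sumElim_neg, Finset.sum_filter, Fintype.sum_sum_type, Sum.elim_inl,
    Sum.elim_inr, Pi.neg_apply, neg_mul] at h ⊢
  convert h using 3
  rw [sub_eq_add_neg, ← Finset.sum_neg_distrib]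
  exact congrArg _ (Finset.sum_congr rfl fun i _ => by split_ifs <;> simp)

theorem exists_perm_norm_sub_le {P : (Fin d → ℝ) → Prop}
    (hP : ∀ u v, P u → P v → ¬SameRay ℝ u (-v)) {aΓ aΘ : ι → Fin d → ℝ} {cΓ cΘ : ι → Fin D → ℝ}
    (hΓP : ∀ i, P (aΓ i)) (hΘP : ∀ k, P (aΘ k))
    (hΓbal : ∀ i, ‖cΓ i‖ = ‖aΓ i‖) (hΘbal : ∀ k, ‖cΘ k‖ = ‖aΘ k‖)
    (hΓinj : ∀ i i', SameRay ℝ (aΓ i) (aΓ i') → i = i')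
    (hΘinj : ∀ k k', SameRay ℝ (aΘ k) (aΘ k') → k = k') :
    ∃ σ : Equiv.Perm ι, ∀ i,
      ‖aΘ (σ i) - aΓ i‖ ≤ 2 * √(2 * vSobSemi d D (fun x j =>
          realization aΘ cΘ x j - realization aΓ cΓ x j)) ∧
        ‖cΘ (σ i) - cΓ i‖ ≤ 2 * √(2 * vSobSemi d D (fun x j =>
          realization aΘ cΘ x j - realization aΓ cΓ x j)) := by
  have hne : ∀ u, P u → u ≠ 0 := fun u hu h => hP u u hu hu (h ▸ SameRay.zero_left _)
  obtain ⟨σ, hσ⟩ := exists_perm_of_injective_rel (fun i k => SameRay ℝ (aΓ i) (aΘ k))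
    (fun i _ _ h h' => hΘinj _ _ (h.symm.trans h' fun h0 => (hne _ (hΓP i) h0).elim))
    (fun _ _ k h h' => hΓinj _ _ (h.trans h'.symm fun h0 => (hne _ (hΘP k) h0).elim))
  have hjump := fun v (hv : P v) => abs_sub_sum_sameRay_le_two_mul_vSobSemi cΘ cΓ (hne v hv)
    (fun k => hP _ _ (hΘP k) hv) (fun i => hP _ _ (hΓP i) hv)
  refine ⟨σ, fun i => ?_⟩
  by_cases hi : SameRay ℝ (aΓ i) (aΘ (σ i))
  · refine norm_sub_le_of_sameRay (hΘbal _) (hΓbal i) hi.symm fun j l => ?_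
    simpa only [sum_sameRay_eq_of_sameRay hΘinj (hne _ (hΓP i)) hi.symm,
      sum_sameRay_eq_of_sameRay hΓinj (hne _ (hΓP i)) SameRay.rfl] using hjump _ (hΓP i) j l
  -- an unmatched pair of neurons: both are isolated, so each has a small outer product
  have hΘoff : ∀ k, ¬SameRay ℝ (aΘ k) (aΓ i) := fun k hk => hi (hσ i k hk.symm ▸ hk.symm)
  have hΓoff : ∀ i', ¬SameRay ℝ (aΓ i') (aΘ (σ i)) := fun i' h =>
    hi (σ.injective (hσ i' _ h) ▸ h)
  refine norm_sub_le_of_forall_abs_mul_le (hΘbal _) (hΓbal i) (fun j l => ?_) (fun j l => ?_)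
  · simpa only [sum_sameRay_eq_of_sameRay hΘinj (hne _ (hΘP _)) SameRay.rfl,
      sum_sameRay_eq_zero hΓoff, sub_zero] using hjump _ (hΘP (σ i)) j l
  · simpa only [sum_sameRay_eq_zero hΘoff,
      sum_sameRay_eq_of_sameRay hΓinj (hne _ (hΓP i)) SameRay.rfl, zero_sub, abs_neg]
      using hjump _ (hΓP i) j l

end ShallowReLU

open ShallowReLU

/-- Inverse stability on the restricted parametrization space `𝒩*_N`
(balanced, no redundant directions, last two coordinates of each first-layer
row strictly positive): for every `Γ ∈ 𝒩*_N` and every realization `g` of some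
`Θ ∈ 𝒩*_N` there is a parametrization `Φ ∈ 𝒩*_N` of `g` with
`‖Φ − Γ‖_∞ ≤ 4·|g − R(Γ)|_{W^{1,∞}}^{1/2}`. -/
theorem stmt_13 {d m D : ℕ} (hd : 2 ≤ d)
    (aΓ : Fin m → Fin d → ℝ) (cΓ : Fin m → Fin D → ℝ)
    (aΘ : Fin m → Fin d → ℝ) (cΘ : Fin m → Fin D → ℝ)
    (hΓbal : ∀ i, ‖cΓ i‖ = ‖aΓ i‖)
    (hΓred : ∀ i j, i ≠ j → aΓ i ≠ 0 → aΓ j ≠ 0 → ∀ μ : ℝ, 0 < μ → aΓ i ≠ μ • aΓ j)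
    (hΓpos : ∀ i, 0 < aΓ i ⟨d - 1, by omega⟩ ∧ 0 < aΓ i ⟨d - 2, by omega⟩)
    (hΘbal : ∀ i, ‖cΘ i‖ = ‖aΘ i‖)
    (hΘred : ∀ i j, i ≠ j → aΘ i ≠ 0 → aΘ j ≠ 0 → ∀ μ : ℝ, 0 < μ → aΘ i ≠ μ • aΘ j)
    (hΘpos : ∀ i, 0 < aΘ i ⟨d - 1, by omega⟩ ∧ 0 < aΘ i ⟨d - 2, by omega⟩) :
    ∃ (aΦ : Fin m → Fin d → ℝ) (cΦ : Fin m → Fin D → ℝ),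
      (∀ i, ‖cΦ i‖ = ‖aΦ i‖) ∧
      (∀ i j, i ≠ j → aΦ i ≠ 0 → aΦ j ≠ 0 → ∀ μ : ℝ, 0 < μ → aΦ i ≠ μ • aΦ j) ∧
      (∀ i, 0 < aΦ i ⟨d - 1, by omega⟩ ∧ 0 < aΦ i ⟨d - 2, by omega⟩) ∧
      (∀ x : Fin d → ℝ, ∀ j : Fin D,
        ∑ i, cΦ i j * max (∑ l, aΦ i l * x l) 0 =
          ∑ i, cΘ i j * max (∑ l, aΘ i l * x l) 0) ∧
      max (⨆ i, ⨆ l, |aΦ i l - aΓ i l|) (⨆ i, ⨆ j, |cΦ i j - cΓ i j|) ≤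
        4 * Real.sqrt (vSobSemi d D (fun x j =>
          (∑ i, cΘ i j * max (∑ l, aΘ i l * x l) 0) -
            ∑ i, cΓ i j * max (∑ l, aΓ i l * x l) 0)) := by
  change ∃ aΦ cΦ, _ ∧ _ ∧ _ ∧ _ ∧ _ ≤ 4 * √(vSobSemi d D fun x j =>
    realization aΘ cΘ x j - realization aΓ cΓ x j)
  have hΓ0 : ∀ i, aΓ i ≠ 0 := fun i h => (hΓpos i).1.ne' (congrFun h _)
  have hΘ0 : ∀ k, aΘ k ≠ 0 := fun k h => (hΘpos k).1.ne' (congrFun h _)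
  obtain ⟨σ, hσ⟩ := exists_perm_norm_sub_le (cΓ := cΓ) (cΘ := cΘ)
    (P := fun u => 0 < u ⟨d - 1, by omega⟩) (fun _ _ hu hv => not_sameRay_neg_of_apply_pos hu hv)
    (fun i => (hΓpos i).1) (fun k => (hΘpos k).1) hΓbal hΘbal
    (fun _ _ => eq_of_sameRay hΓ0 hΓred) (fun _ _ => eq_of_sameRay hΘ0 hΘred)
  refine ⟨fun i => aΘ (σ i), fun i => cΘ (σ i), fun i => hΘbal _,
    fun i k hik => hΘred _ _ (σ.injective.ne hik), fun i => hΘpos _,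
    fun x j => Equiv.sum_comp σ fun k => cΘ k j * max (∑ l, aΘ k l * x l) 0, ?_⟩
  have hsqrt := two_mul_sqrt_two_mul_le (vSobSemi d D fun x j =>
    realization aΘ cΘ x j - realization aΓ cΓ x j)
  refine max_le (Real.iSup_le (fun i => Real.iSup_le (fun l => ?_) (by positivity)) (by positivity))
    (Real.iSup_le (fun i => Real.iSup_le (fun j => ?_) (by positivity)) (by positivity))
  · exact ((abs_apply_le_norm (aΘ (σ i) - aΓ i) l).trans (hσ i).1).trans hsqrt
  · exact ((abs_apply_le_norm (cΘ (σ i) - cΓ i) j).trans (hσ i).2).trans hsqrt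
end

section
/- Combined optimality theorem: Let S = {f ∈ B : Λ(f) ≤ C} be compact in the closure of the realization space, with Λ quasi-convex, and let Ω_N = {Φ ∈ P_N : Λ(R(Φ)) ≤ C}. Assume for every architecture N the realization map is (s,α) inverse stable on Ω_N with parameters independent of N, and assume L is convex and c-Lipschitz on S. Then for all ε, r > 0 there exists an architecture size n(ε, r) such that for every architecture N at least as large (coordinatewise in the hidden layers), every local minimum Γ* of min_{Γ ∈ Ω_N} L(R(Γ)) with radius at least r satisfies L(R(Γ*)) ≤ min_{Γ ∈ Ω_N} L(R(Γ)) + ε. -/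
/-!
Inverse stability turns a parameter local minimum of radius `r` into a local minimum of radius
`r' = (r / s) ^ (1 / α)` of `L` on the realization set. By compactness of `S`, a large enough
architecture realizes an `η`-net of `S`, and on such a net a local minimum `g*` of radius `r'`
of the convex, Lipschitz loss is almost optimal: comparing `g*` with an approximant of the
convex combination `(1 - t) g* + t g`, which lies within `r'` of `g*`, gives
`t L(g*) ≤ t L(g) + c η`.
-/

open Metric

theorem IsCompact.exists_subset_thickening_of_monotone {ι X : Type*} [PseudoMetricSpace X]
    [Preorder ι] [IsDirected ι (· ≤ ·)] [Nonempty ι] {S : Set X} {A : ι → Set X}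
    (hS : IsCompact S) (hA : Monotone A) (hSA : S ⊆ closure (⋃ i, A i)) {η : ℝ} (hη : 0 < η) :
    ∃ i, S ⊆ thickening η (A i) := by
  refine hS.elim_directed_cover _ (fun _ => isOpen_thickening) ?_
    (Monotone.directed_le fun _ _ hij => thickening_subset_of_subset η (hA hij))
  rw [← thickening_iUnion]
  exact hSA.trans (closure_subset_thickening hη _)

theorem isMinOn_image_inter_closedBall_of_inverseStable {X Y Z : Type*} [PseudoMetricSpace X]
    [PseudoMetricSpace Y] [LinearOrder Z] {R : X → Y} {L : Y → Z} {Ω : Set X} {Γ : X}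
    {s α r : ℝ} (hs : 0 < s) (hα : 0 < α) (hr : 0 ≤ r)
    (hinv : ∀ g ∈ R '' Ω, ∃ Φ ∈ Ω, R Φ = g ∧ dist Φ Γ ≤ s * dist g (R Γ) ^ α)
    (hmin : IsMinOn (L ∘ R) (Ω ∩ closedBall Γ r) Γ) :
    IsMinOn L (R '' Ω ∩ closedBall (R Γ) ((r / s) ^ α⁻¹)) (R Γ) := by
  rintro g ⟨hg, hgΓ⟩
  obtain ⟨Φ, hΦ, rfl, hΦΓ⟩ := hinv g hg
  refine hmin ⟨hΦ, ?_⟩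
  calc dist Φ Γ ≤ s * dist (R Φ) (R Γ) ^ α := hΦΓ
    _ ≤ s * ((r / s) ^ α⁻¹) ^ α := by gcongr; exact hgΓ
    _ = r := by
      rw [← Real.rpow_mul (by positivity), inv_mul_cancel₀ hα.ne', Real.rpow_one,
        mul_div_cancel₀ _ hs.ne']

section ConvexLipschitz

variable {B : Type*} [NormedAddCommGroup B] [NormedSpace ℝ B] {S A : Set B} {L : B → ℝ}
  {K : NNReal}

theorem ConvexOn.mul_le_add_of_isMinOn_inter_closedBall (hL : ConvexOn ℝ S L)
    (hlip : LipschitzOnWith K L S) (hA : A ⊆ S) {η r t : ℝ} (hSA : S ⊆ thickening η A)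
    (hη : η ≤ r / 2) {gs g : B} (hgs : gs ∈ S) (hg : g ∈ S)
    (hmin : IsMinOn L (A ∩ closedBall gs r) gs) (ht0 : 0 ≤ t) (ht1 : t ≤ 1)
    (htg : t * dist g gs ≤ r / 2) :
    t * L gs ≤ t * L g + K * η := by
  set gt := (1 - t) • gs + t • g
  have hgt : gt ∈ S := hL.1 hgs hg (by linarith) ht0 (by ring)
  obtain ⟨h, hA', hgth⟩ := mem_thickening_iff.1 (hSA hgt)
  have hgtgs : dist gt gs = t * dist g gs := by
    rw [dist_eq_norm, dist_eq_norm, ← norm_smul_of_nonneg ht0]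
    congr 1
    simp only [gt, sub_smul, one_smul, smul_sub]
    abel
  have hhgs : dist h gs ≤ r := by
    linarith [dist_triangle h gt gs, dist_comm gt h]
  have hmin' : L gs ≤ L h := hmin ⟨hA', hhgs⟩
  have hlip' : L h ≤ L gt + K * η := calc
    L h ≤ L gt + dist (L h) (L gt) := by
      rw [Real.dist_eq]; linarith [le_abs_self (L h - L gt)]
    _ ≤ L gt + K * dist h gt := by gcongr; exact hlip.dist_le_mul h (hA hA') gt hgt
    _ ≤ L gt + K * η := by gcongr; rw [dist_comm]; exact hgth.le
  have hconv : L gt ≤ (1 - t) * L gs + t * L g :=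
    hL.2 hgs hg (by linarith) ht0 (by ring)
  linarith

theorem ConvexOn.exists_pos_forall_le_add_of_isMinOn_inter_closedBall (hL : ConvexOn ℝ S L)
    (hlip : LipschitzOnWith K L S) (hSb : Bornology.IsBounded S) {ε r : ℝ} (hε : 0 < ε)
    (hr : 0 < r) :
    ∃ η > 0, ∀ A ⊆ S, S ⊆ thickening η A → ∀ gs ∈ S, IsMinOn L (A ∩ closedBall gs r) gs →
      ∀ g ∈ S, L gs ≤ L g + ε := by
  -- `t` is the step towards `g` that keeps the convex combination within `r / 2` of `gs`
  set t := r / (2 * diam S + r)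
  have hdiam : 0 ≤ diam S := diam_nonneg
  have ht0 : 0 < t := by positivity
  have ht1 : t ≤ 1 := div_le_one_of_le₀ (by linarith) (by positivity)
  refine ⟨min (r / 2) (ε * t / (K + 1)), by positivity, ?_⟩
  intro A hA hSA gs hgs hmin g hg
  have htg : t * dist g gs ≤ r / 2 := by
    calc t * dist g gs ≤ t * diam S := by gcongr; exact dist_le_diam_of_mem hSb hg hgs
      _ ≤ r / 2 := by
        rw [div_mul_eq_mul_div, div_le_div_iff₀ (by positivity) two_pos]
        nlinarith
  have key := hL.mul_le_add_of_isMinOn_inter_closedBall hlip hA hSA (min_le_left _ _) hgs hg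
    hmin ht0.le ht1 htg
  have hKη : (K : ℝ) * min (r / 2) (ε * t / (K + 1)) ≤ ε * t := by
    calc (K : ℝ) * min (r / 2) (ε * t / (K + 1)) ≤ (K + 1) * (ε * t / (K + 1)) := by
          gcongr
          · linarith
          · exact min_le_right _ _
      _ = ε * t := mul_div_cancel₀ _ (by positivity)
  have : t * L gs ≤ t * (L g + ε) := by linarith
  exact le_of_mul_le_mul_left this ht0

end ConvexLipschitz

theorem stmt_16_general {B : Type*} [NormedAddCommGroup B] [NormedSpace ℝ B]
    (Lhid : ℕ)
    (P : (Fin Lhid → ℕ) → Type*) [∀ N, NormedAddCommGroup (P N)]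
    (R : ∀ N, P N → B)
    (Λ : B → ℝ) (Creg : ℝ)
    (S : Set B) (hS : S = {f | Λ f ≤ Creg})
    (Ω : ∀ N, Set (P N)) (hΩ : ∀ N, Ω N = {Φ | Λ (R N Φ) ≤ Creg})
    (hcompact : IsCompact S)
    (hdense : S ⊆ closure (⋃ N, R N '' Ω N))
    (hmono : ∀ N N', (∀ i, N i ≤ N' i) → R N '' Ω N ⊆ R N' '' Ω N')
    (L : B → ℝ) (c : ℝ) (hLconv : ConvexOn ℝ S L)
    (hLlip : ∀ x ∈ S, ∀ y ∈ S, |L x - L y| ≤ c * ‖x - y‖)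
    (s α : ℝ) (hs : 0 < s) (hα : 0 < α)
    (hinv : ∀ N, ∀ Γ ∈ Ω N, ∀ g ∈ R N '' Ω N,
      ∃ Φ ∈ Ω N, R N Φ = g ∧ ‖Φ - Γ‖ ≤ s * ‖g - R N Γ‖ ^ α) :
    ∀ ε r : ℝ, 0 < ε → 0 < r → ∃ n : Fin Lhid → ℕ,
      ∀ N : Fin Lhid → ℕ, (∀ i, n i ≤ N i) →
        ∀ Γs ∈ Ω N, (∀ Φ ∈ Ω N, ‖Φ - Γs‖ ≤ r → L (R N Γs) ≤ L (R N Φ)) →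
          ∀ Γ ∈ Ω N, L (R N Γs) ≤ L (R N Γ) + ε := by
  intro ε r hε hr
  have hlip : LipschitzOnWith c.toNNReal L S := by
    refine lipschitzOnWith_iff_dist_le_mul.2 fun x hx y hy => ?_
    rw [Real.dist_eq, dist_eq_norm]
    exact (hLlip x hx y hy).trans (by gcongr; exact c.le_coe_toNNReal)
  have hRS : ∀ N, R N '' Ω N ⊆ S := by
    rintro N _ ⟨Φ, hΦ, rfl⟩
    rw [hΩ] at hΦ
    rwa [hS]
  obtain ⟨η, hη, hopt⟩ := hLconv.exists_pos_forall_le_add_of_isMinOn_inter_closedBall hlip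
    hcompact.isBounded hε (show 0 < (r / s) ^ α⁻¹ by positivity)
  obtain ⟨n, hn⟩ := hcompact.exists_subset_thickening_of_monotone
    (fun N N' => hmono N N') hdense hη
  refine ⟨n, fun N hnN Γs hΓs hloc Γ hΓ => ?_⟩
  have hmin : IsMinOn (L ∘ R N) (Ω N ∩ closedBall Γs r) Γs := fun Φ ⟨hΦ, hΦr⟩ =>
    hloc Φ hΦ (by rwa [mem_closedBall, dist_eq_norm] at hΦr)
  refine hopt _ (hRS N) (hn.trans (thickening_subset_of_subset η (hmono n N hnN)))
    _ (hRS N ⟨Γs, hΓs, rfl⟩) ?_ _ (hRS N ⟨Γ, hΓ, rfl⟩)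
  refine isMinOn_image_inter_closedBall_of_inverseStable hs hα hr.le (fun g hg => ?_) hmin
  simpa only [dist_eq_norm] using hinv N Γs hΓs g hg

/-- Almost optimality of local parameter minima (Theorem `thm:optPara`):
under uniform inverse stability and compactness of the regularized class
`S = {Λ ≤ C}` in the closure of the realization spaces, for all `ε, r > 0`
there is an architecture size `n(ε,r)` such that for every larger architecture
every local minimum of radius `r` of the regularized parametrized problem is
`ε`-optimal. -/
theorem stmt_16 {B : Type*} [NormedAddCommGroup B] [NormedSpace ℝ B]
    (Lhid : ℕ)
    (P : (Fin Lhid → ℕ) → Type*) [∀ N, NormedAddCommGroup (P N)]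
    (R : ∀ N, P N → B)
    (Λ : B → ℝ) (hΛ : QuasiconvexOn ℝ Set.univ Λ) (Creg : ℝ)
    (S : Set B) (hS : S = {f | Λ f ≤ Creg})
    (Ω : ∀ N, Set (P N)) (hΩ : ∀ N, Ω N = {Φ | Λ (R N Φ) ≤ Creg})
    (hcompact : IsCompact S)
    (hdense : S ⊆ closure (⋃ N, R N '' Ω N))
    (hmono : ∀ N N', (∀ i, N i ≤ N' i) → R N '' Ω N ⊆ R N' '' Ω N')
    (L : B → ℝ) (hL : ∀ g, 0 ≤ L g) (c : ℝ) (hLconv : ConvexOn ℝ S L)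
    (hLlip : ∀ x ∈ S, ∀ y ∈ S, |L x - L y| ≤ c * ‖x - y‖)
    (s α : ℝ) (hs : 0 < s) (hα : 0 < α)
    (hinv : ∀ N, ∀ Γ ∈ Ω N, ∀ g ∈ R N '' Ω N,
      ∃ Φ ∈ Ω N, R N Φ = g ∧ ‖Φ - Γ‖ ≤ s * ‖g - R N Γ‖ ^ α) :
    ∀ ε r : ℝ, 0 < ε → 0 < r → ∃ n : Fin Lhid → ℕ,
      ∀ N : Fin Lhid → ℕ, (∀ i, n i ≤ N i) →
        ∀ Γs ∈ Ω N, (∀ Φ ∈ Ω N, ‖Φ - Γs‖ ≤ r → L (R N Γs) ≤ L (R N Φ)) →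
          ∀ Γ ∈ Ω N, L (R N Γs) ≤ L (R N Γ) + ε :=
  stmt_16_general Lhid P R Λ Creg S hS Ω hΩ hcompact hdense hmono L c hLconv hLlip s α hs hα hinv
end

section
/- Let g_k, g : ℝ^d → ℝ^D be realizations of two-layer bias-free ReLU networks and suppose the first-layer matrix A^Θ ∈ ℝ^{m×d} of a parametrization Θ of g has full row rank m with all output columns nonzero. Then the realization R(Θ) has exactly 2^m maximal open linear regions, given by the preimages H^s = {x : sign pattern of A^Θx equals s} for s ∈ {0,1}^m, on each of which DR(Θ) = C^Θ diag(s) A^Θ, and these 2^m derivative matrices are pairwise distinct. -/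
/-!
Full row rank makes `x ↦ A x` surjective, so every sign pattern `s` is attained and each `H^s`
is a nonempty open set. On `H^s` every ReLU acts as the identity or as zero, so near each of its
points the network coincides with the linear map `C diag(s) A`. Finally, if
`C diag(s) A = C diag(t) A`, linear independence of the rows of `A` gives
`(s_i - t_i) C_i = 0` for every `i`, and the columns `C_i` are nonzero.
-/

open Finset

theorem Matrix.mulVec_surjective_of_linearIndependent_rows {K m n : Type*} [Field K]
    [Fintype m] [Fintype n] {M : Matrix m n K} (h : LinearIndependent K M.row) :
    Function.Surjective M.mulVec := by
  have hrange : LinearMap.range M.mulVecLin = ⊤ :=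
    Submodule.eq_top_of_finrank_eq <| by
      rw [← Matrix.rank, h.rank_matrix, Module.finrank_fintype_fun_eq_card]
  exact LinearMap.range_eq_top.mp hrange

section SignRegion

variable {ι κ : Type*} [Fintype κ]

def signRegion (A : ι → κ → ℝ) (s : ι → Bool) : Set (κ → ℝ) :=
  {x | ∀ i, if s i then 0 < ∑ l, A i l * x l else ∑ l, A i l * x l < 0}

theorem signRegion_nonempty [Fintype ι] {A : ι → κ → ℝ} (hA : LinearIndependent ℝ A)
    (s : ι → Bool) : (signRegion A s).Nonempty := by
  obtain ⟨x, hx⟩ := Matrix.mulVec_surjective_of_linearIndependent_rows (M := Matrix.of A) hA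
    fun i => if s i then 1 else -1
  refine ⟨x, fun i => ?_⟩
  rw [show ∑ l, A i l * x l = if s i then 1 else -1 from congrFun hx i]
  cases s i <;> norm_num

theorem isOpen_signRegion [Finite ι] (A : ι → κ → ℝ) (s : ι → Bool) :
    IsOpen (signRegion A s) := by
  simp only [signRegion, Set.ofPred_forall]
  refine isOpen_iInter_of_finite fun i => ?_
  have hcont : Continuous fun x : κ → ℝ => ∑ l, A i l * x l := by fun_prop
  cases s i
  · exact isOpen_lt hcont continuous_const
  · exact isOpen_lt continuous_const hcont

theorem max_sum_mul_zero_of_mem_signRegion {A : ι → κ → ℝ} {s : ι → Bool} {x : κ → ℝ}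
    (hx : x ∈ signRegion A s) (i : ι) :
    max (∑ l, A i l * x l) 0 = if s i then ∑ l, A i l * x l else 0 := by
  have hxi := hx i
  cases h : s i <;> simp only [h, if_true] at hxi ⊢
  · exact max_eq_right hxi.le
  · exact max_eq_left hxi.le

/-- The derivative is `c diag(s) A`. -/
theorem hasFDerivAt_sum_mul_relu_of_mem_signRegion [Fintype ι] {A : ι → κ → ℝ} {s : ι → Bool}
    {x : κ → ℝ} (c : ι → ℝ) (hx : x ∈ signRegion A s) :
    HasFDerivAt (fun y => ∑ i, c i * max (∑ l, A i l * y l) 0)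
      (∑ i ∈ univ.filter (fun i => s i),
        c i • ∑ l, A i l • ContinuousLinearMap.proj (R := ℝ) (φ := fun _ : κ => ℝ) l) x := by
  refine ContinuousLinearMap.hasFDerivAt _ |>.congr_of_eventuallyEq ?_
  filter_upwards [(isOpen_signRegion A s).mem_nhds hx] with y hy
  rw [_root_.sum_apply, sum_filter]
  refine sum_congr rfl fun i _ => ?_
  cases h : s i <;> simp [max_sum_mul_zero_of_mem_signRegion hy, h, mul_sum]

end SignRegion

theorem eq_of_sum_filter_mul_eq {R ι κ μ : Type*} [Semiring R] [Fintype ι]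
    {A : ι → κ → R} {C : ι → μ → R} (hA : LinearIndependent R A) (hC : ∀ i, C i ≠ 0)
    {s t : ι → Bool}
    (h : ∀ j l, ∑ i ∈ univ.filter (fun i => s i), C i j * A i l =
      ∑ i ∈ univ.filter (fun i => t i), C i j * A i l) : s = t := by
  have hcoeff : ∀ i j, (if s i then C i j else 0) = if t i then C i j else 0 := by
    intro i j
    refine Fintype.linearIndependent_iffₛ.mp hA (fun i => if s i then C i j else 0)
      (fun i => if t i then C i j else 0) ?_ i
    ext l
    simpa only [Finset.sum_apply, Pi.smul_apply, smul_eq_mul, ite_mul, zero_mul, sum_filter] using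
      h j l
  funext i
  obtain ⟨j, hj⟩ := Function.ne_iff.mp (hC i)
  have := hcoeff i j
  cases hs : s i <;> cases ht : t i <;> simp_all

/-- For a shallow bias-free ReLU network whose first-layer rows are linearly
independent (full row rank) and whose output columns are all nonzero, all
`2^m` sign regions `H^s` are nonempty open linear regions, on each of which
the derivative equals `C diag(s) A`, and these `2^m` derivative matrices are
pairwise distinct. -/
theorem stmt_19 {d m D : ℕ}
    (A : Fin m → Fin d → ℝ) (C : Fin m → Fin D → ℝ)
    (hA : LinearIndependent ℝ A) (hC : ∀ i, C i ≠ 0) :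
    (∀ s : Fin m → Bool,
      {x : Fin d → ℝ | ∀ i,
        if s i then 0 < ∑ l, A i l * x l else ∑ l, A i l * x l < 0}.Nonempty) ∧
    (∀ s : Fin m → Bool, ∀ x ∈ {x : Fin d → ℝ | ∀ i,
        if s i then 0 < ∑ l, A i l * x l else ∑ l, A i l * x l < 0},
      ∀ j : Fin D,
        DifferentiableAt ℝ (fun y => ∑ i, C i j * max (∑ l, A i l * y l) 0) x ∧
        ∀ v : Fin d → ℝ,
          fderiv ℝ (fun y => ∑ i, C i j * max (∑ l, A i l * y l) 0) x v =
            ∑ i ∈ Finset.univ.filter (fun i => s i), C i j * ∑ l, A i l * v l) ∧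
    ∀ s t : Fin m → Bool,
      (∀ (j : Fin D) (l : Fin d),
        ∑ i ∈ Finset.univ.filter (fun i => s i), C i j * A i l =
          ∑ i ∈ Finset.univ.filter (fun i => t i), C i j * A i l) → s = t := by
  refine ⟨signRegion_nonempty hA, fun s x hx j => ?_, fun s t => eq_of_sum_filter_mul_eq hA hC⟩
  have hderiv := hasFDerivAt_sum_mul_relu_of_mem_signRegion (fun i => C i j) hx
  exact ⟨hderiv.differentiableAt, fun v => by simp [hderiv.fderiv]⟩
end
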